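/- arXiv:math/0701564 — 10 statements merged into one kernel-verified Lean document; each statement's English description precedes it below -/
import Mathlib

section
/- Let ω̄ : [0,∞) → (0,∞) be continuous and let t ≥ 0. For every smooth real-valued function u compactly supported in (t,∞), the weighted Hardy inequality ∫_t^∞ u(r)² ω̄(r) dr ≤ 4 · sup_{s>t} ( ∫_t^s ω̄(r)⁻¹ dr · ∫_s^∞ ω̄(r) dr ) · ∫_t^∞ u'(r)² ω̄(r) dr holds (with the convention that the right-hand side is ∞ if the supremum is infinite). -/
open MeasureTheory Set Filter Topology
open scoped ENNReal

/-- Cauchy-Schwarz for interval integrals of continuous functions. -/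
lemma cs_aux {a b : ℝ} (hab : a ≤ b) {f g : ℝ → ℝ}
    (hf : ContinuousOn f (Icc a b)) (hg : ContinuousOn g (Icc a b)) :
    (∫ x in a..b, f x * g x) ^ 2 ≤
      (∫ x in a..b, f x ^ 2) * (∫ x in a..b, g x ^ 2) := by
  have huIcc : uIcc a b = Icc a b := uIcc_of_le hab
  have hif : IntervalIntegrable f volume a b :=
    (hf.mono huIcc.subset).intervalIntegrable
  have hig : IntervalIntegrable g volume a b :=
    (hg.mono huIcc.subset).intervalIntegrable
  have hif2 : IntervalIntegrable (fun x => f x ^ 2) volume a b :=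
    ((hf.mul hf).mono huIcc.subset).intervalIntegrable.congr ?hc1
  case hc1 => intro x _; show f x * f x = f x ^ 2; ring
  have hig2 : IntervalIntegrable (fun x => g x ^ 2) volume a b :=
    ((hg.mul hg).mono huIcc.subset).intervalIntegrable.congr ?hc2
  case hc2 => intro x _; show g x * g x = g x ^ 2; ring
  have hifg : IntervalIntegrable (fun x => f x * g x) volume a b :=
    ((hf.mul hg).mono huIcc.subset).intervalIntegrable
  have key : ∀ l : ℝ,
      0 ≤ (∫ x in a..b, f x ^ 2) * (l * l) + (2 * ∫ x in a..b, f x * g x) * l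
          + (∫ x in a..b, g x ^ 2) := by
    intro l
    have h0 : 0 ≤ ∫ x in a..b, (l * f x + g x) ^ 2 :=
      intervalIntegral.integral_nonneg hab (fun x _ => sq_nonneg _)
    have hexp : ∫ x in a..b, (l * f x + g x) ^ 2
        = (∫ x in a..b, f x ^ 2) * (l * l) + (2 * ∫ x in a..b, f x * g x) * l
          + (∫ x in a..b, g x ^ 2) := by
      have : ∀ x, (l * f x + g x) ^ 2
          = (l * l) * f x ^ 2 + (2 * l) * (f x * g x) + g x ^ 2 := by intro x; ring
      rw [intervalIntegral.integral_congr (g := fun x =>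
        (l * l) * f x ^ 2 + (2 * l) * (f x * g x) + g x ^ 2) (fun x _ => this x)]
      rw [intervalIntegral.integral_add ((hif2.const_mul _).add (hifg.const_mul _)) hig2,
        intervalIntegral.integral_add (hif2.const_mul _) (hifg.const_mul _),
        intervalIntegral.integral_const_mul, intervalIntegral.integral_const_mul]
      ring
    linarith [h0, hexp ▸ h0, le_of_eq hexp]
  have hd := discrim_le_zero key
  rw [discrim] at hd
  nlinarith [hd]
lemma swap_aux (c : ℝ) (A B : ℝ → ℝ≥0∞) (hA : Measurable A) (hB : Measurable B) :
    ∫⁻ r in Ioi c, A r * ∫⁻ s in Ioc c r, B s =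
      ∫⁻ s in Ioi c, B s * ∫⁻ r in Ici s, A r := by
  set S : Set (ℝ × ℝ) := {p : ℝ × ℝ | c < p.2 ∧ p.2 ≤ p.1} with hS
  have hSm : MeasurableSet S := by
    apply MeasurableSet.inter
    · exact measurableSet_lt measurable_const measurable_snd
    · exact measurableSet_le measurable_snd measurable_fst
  set g : ℝ × ℝ → ℝ≥0∞ := S.indicator (fun p => A p.1 * B p.2) with hg
  have hgm : Measurable g :=
    ((hA.comp measurable_fst).mul (hB.comp measurable_snd)).indicator hSm
  have h1 : ∀ r : ℝ, (fun s => g (r, s)) = (Ioc c r).indicator (fun s => A r * B s) := by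
    intro r; funext s
    by_cases h : s ∈ Ioc c r
    · rw [indicator_of_mem h]
      exact indicator_of_mem (show (r,s) ∈ S from ⟨h.1, h.2⟩) _
    · rw [indicator_of_notMem h]
      exact indicator_of_notMem (by simpa [S, mem_Ioc] using h) _
  have h2 : ∀ s : ℝ, (fun r => g (r, s)) =
      if c < s then (Ici s).indicator (fun r => A r * B s) else 0 := by
    intro s; funext r
    by_cases hcs : c < s
    · rw [if_pos hcs]
      by_cases h : r ∈ Ici s
      · rw [indicator_of_mem h]; exact indicator_of_mem (show (r,s) ∈ S from ⟨hcs, h⟩) _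
      · rw [indicator_of_notMem h]
        exact indicator_of_notMem (fun hp => h hp.2) _
    · rw [if_neg hcs]
      exact indicator_of_notMem (fun hp => hcs hp.1) _
  have lhs_eq : ∫⁻ r in Ioi c, A r * ∫⁻ s in Ioc c r, B s
      = ∫⁻ r, ∫⁻ s, g (r, s) := by
    have : ∀ r : ℝ, ∫⁻ s, g (r, s) = A r * ∫⁻ s in Ioc c r, B s := by
      intro r
      rw [h1 r, lintegral_indicator measurableSet_Ioc _, lintegral_const_mul _ hB]
    rw [lintegral_congr this]
    rw [← lintegral_indicator measurableSet_Ioi _]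
    congr 1; funext r
    by_cases h : r ∈ Ioi c
    · rw [indicator_of_mem h]
    · rw [indicator_of_notMem h, Ioc_eq_empty (by simpa using h), Measure.restrict_empty,
        lintegral_zero_measure, mul_zero]
  have rhs_eq : ∫⁻ s in Ioi c, B s * ∫⁻ r in Ici s, A r
      = ∫⁻ s, ∫⁻ r, g (r, s) := by
    have : ∀ s : ℝ, ∫⁻ r, g (r, s) =
        if c < s then B s * ∫⁻ r in Ici s, A r else 0 := by
      intro s
      rw [h2 s]
      by_cases hcs : c < s
      · rw [if_pos hcs, if_pos hcs, lintegral_indicator measurableSet_Ici _]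
        rw [← lintegral_const_mul _ hA]
        congr 1; funext r; ring
      · rw [if_neg hcs, if_neg hcs]; exact lintegral_zero
    rw [lintegral_congr this, ← lintegral_indicator measurableSet_Ioi _]
    refine lintegral_congr fun s => ?_
    by_cases h : s ∈ Ioi c
    · rw [indicator_of_mem h, if_pos (mem_Ioi.1 h)]
    · rw [indicator_of_notMem h, if_neg (fun hc => h (mem_Ioi.2 hc))]
  rw [lhs_eq, rhs_eq]
  exact lintegral_lintegral_swap (f := fun r s => g (r, s)) hgm.aemeasurable

lemma main_aux (Ω : ℝ → ℝ) (hΩc : Continuous Ω) (hΩpos : ∀ r, 0 < Ω r)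
    (t t₀ : ℝ) (ht₀ : t < t₀)
    (u : ℝ → ℝ) (hu : ContDiff ℝ (⊤ : ℕ∞) u)
    (hu0 : ∀ x, x ≤ t₀ → u x = 0)
    (hΩint : IntegrableOn Ω (Ioi t))
    (K : ℝ) (hK : 0 ≤ K)
    (hWV : ∀ s, t < s → (∫ x in t..s, (Ω x)⁻¹) * (∫ x in Ioi s, Ω x) ≤ K) :
    (∫⁻ r in Ioi t, ENNReal.ofReal ((u r)^2 * Ω r)) ≤
      ENNReal.ofReal (4 * K) * ∫⁻ r in Ioi t, ENNReal.ofReal ((deriv u r)^2 * Ω r) := by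
  have hud : Differentiable ℝ u := hu.differentiable (by simp)
  have hudc : Continuous (deriv u) := hu.continuous_deriv (by simp)
  set W : ℝ → ℝ := fun r => ∫ x in t..r, (Ω x)⁻¹ with hWdef
  set q : ℝ → ℝ := fun s => (deriv u s)^2 * Ω s with hqdef
  have hΩinv : Continuous fun x => (Ω x)⁻¹ := hΩc.inv₀ (fun x => (hΩpos x).ne')
  have hWint : ∀ a b : ℝ, IntervalIntegrable (fun x => (Ω x)⁻¹) volume a b :=
    fun a b => hΩinv.intervalIntegrable a b
  have hWd : ∀ r, HasDerivAt W ((Ω r)⁻¹) r :=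
    fun r => (hΩinv.integral_hasStrictDerivAt t r).hasDerivAt
  have hWc : Continuous W :=
    (Differentiable.continuous (fun r => (hWd r).differentiableAt))
  have hWmono : ∀ a b : ℝ, a ≤ b → W a ≤ W b := by
    intro a b hab
    have h := intervalIntegral.integral_add_adjacent_intervals (hWint t a) (hWint a b)
    have hnn : 0 ≤ ∫ x in a..b, (Ω x)⁻¹ :=
      intervalIntegral.integral_nonneg hab (fun x _ => inv_nonneg.2 (hΩpos x).le)
    simp only [hWdef]
    linarith [h]
  have hWpos : ∀ s, t < s → 0 < W s := fun s hs =>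
    intervalIntegral.intervalIntegral_pos_of_pos_on (hWint t s)
      (fun x _ => inv_pos.2 (hΩpos x)) hs
  have hWt₀ : 0 < W t₀ := hWpos t₀ ht₀
  have hWposIci : ∀ r, t₀ ≤ r → 0 < W r := fun r hr => lt_of_lt_of_le hWt₀ (hWmono _ _ hr)
  set V : ℝ → ℝ := fun r => (∫ x in Ioi t, Ω x) - ∫ x in t..r, Ω x with hVdef
  have hVd : ∀ r, HasDerivAt V (-(Ω r)) r :=
    fun r => ((hΩc.integral_hasStrictDerivAt t r).hasDerivAt).const_sub _
  have hVIoi : ∀ r, t ≤ r → V r = ∫ x in Ioi r, Ω x := by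
    intro r hr
    have hsplit : ∫ x in Ioi t, Ω x = (∫ x in Ioc t r, Ω x) + ∫ x in Ioi r, Ω x := by
      rw [← setIntegral_union (Ioc_disjoint_Ioi le_rfl) measurableSet_Ioi
        (hΩint.mono_set Ioc_subset_Ioi_self) (hΩint.mono_set (Ioi_subset_Ioi hr)),
        Ioc_union_Ioi_eq_Ioi hr]
    simp only [hVdef]
    rw [intervalIntegral.integral_of_le hr]
    linarith
  have hTailPos : ∀ s, t ≤ s → 0 < ∫ x in Ioi s, Ω x := by
    intro s hs
    have h1 : 0 < ∫ x in s..(s+1), Ω x :=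
      intervalIntegral.intervalIntegral_pos_of_pos_on (hΩc.intervalIntegrable _ _)
        (fun x _ => hΩpos x) (by linarith)
    have h2 : (∫ x in s..(s+1), Ω x) ≤ ∫ x in Ioi s, Ω x := by
      rw [intervalIntegral.integral_of_le (by linarith : s ≤ s+1)]
      apply setIntegral_mono_set (hΩint.mono_set (Ioi_subset_Ioi hs))
        (Eventually.of_forall (fun x => (hΩpos x).le))
        (HasSubset.Subset.eventuallyLE Ioc_subset_Ioi_self)
    linarith
  have hVpos : ∀ r, 0 < V r := by
    intro r
    rcases le_total t r with h | h
    · rw [hVIoi r h]; exact hTailPos r h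
    · have h1 : V t = ∫ x in Ioi t, Ω x := hVIoi t le_rfl
      have h2 : (∫ x in t..r, Ω x) ≤ 0 := by
        have h4 : ∫ x in t..r, Ω x = -∫ x in r..t, Ω x := intervalIntegral.integral_symm r t
        have : 0 ≤ ∫ x in r..t, Ω x :=
          intervalIntegral.integral_nonneg h (fun x _ => (hΩpos x).le)
        linarith
      have h3 := hTailPos t le_rfl
      simp only [hVdef] at h1 ⊢
      linarith
  have hVtend : Tendsto V atTop (𝓝 0) := by
    have h1 := intervalIntegral_tendsto_integral_Ioi t hΩint tendsto_id
    have h2 : Tendsto V atTop (𝓝 ((∫ x in Ioi t, Ω x) - ∫ x in Ioi t, Ω x)) :=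
      tendsto_const_nhds.sub h1
    simpa using h2
  have hWVK : ∀ s, t < s → W s * V s ≤ K := by
    intro s hs; rw [hVIoi s hs.le]; exact hWV s hs
  have hsqrtW : Continuous fun r => Real.sqrt (W r) := Real.continuous_sqrt.comp hWc
  set φ : ℝ → ℝ := fun r => Ω r * Real.sqrt (W r) with hφdef
  set ψ : ℝ → ℝ := fun s => q s * Real.sqrt (W s) with hψdef
  have hφc : Continuous φ := hΩc.mul hsqrtW
  have hqc : Continuous q := (hudc.pow 2).mul hΩc
  have hψc : Continuous ψ := hqc.mul hsqrtW
  have hφ0 : ∀ r, 0 ≤ φ r := fun r => mul_nonneg (hΩpos r).le (Real.sqrt_nonneg _)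
  have hq0 : ∀ r, 0 ≤ q r := fun r => mul_nonneg (sq_nonneg _) (hΩpos r).le
  have hψ0 : ∀ r, 0 ≤ ψ r := fun r => mul_nonneg (hq0 r) (Real.sqrt_nonneg _)
  -- Step A
  have stepA : ∀ r, t₀ ≤ r → (u r)^2 * Ω r ≤ 2 * φ r * ∫ s in t₀..r, ψ s := by
    intro r hr
    have hGnn : 0 ≤ ∫ s in t₀..r, ψ s :=
      intervalIntegral.integral_nonneg hr (fun x _ => hψ0 x)
    have hftc : ∫ s in t₀..r, deriv u s = u r - u t₀ :=
      intervalIntegral.integral_deriv_eq_sub (fun x _ => hud.differentiableAt)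
        (hudc.intervalIntegrable _ _)
    have hur : u r = ∫ s in t₀..r, deriv u s := by rw [hftc, hu0 t₀ le_rfl, sub_zero]
    set f : ℝ → ℝ := fun s => deriv u s * Real.sqrt (Ω s * Real.sqrt (W s)) with hfdef
    set g : ℝ → ℝ := fun s => (Real.sqrt (Ω s * Real.sqrt (W s)))⁻¹ with hgdef
    have hposarg : ∀ s ∈ Icc t₀ r, 0 < Ω s * Real.sqrt (W s) := fun s hs =>
      mul_pos (hΩpos s) (Real.sqrt_pos.2 (hWposIci s hs.1))
    have hsq : Continuous fun s => Real.sqrt (Ω s * Real.sqrt (W s)) :=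
      Real.continuous_sqrt.comp (hΩc.mul hsqrtW)
    have hfc : ContinuousOn f (Icc t₀ r) := (hudc.mul hsq).continuousOn
    have hgc : ContinuousOn g (Icc t₀ r) :=
      ContinuousOn.inv₀ hsq.continuousOn
        (fun s hs => (Real.sqrt_pos.2 (hposarg s hs)).ne')
    have hcs := cs_aux hr hfc hgc
    have hfg : ∀ s ∈ uIcc t₀ r, f s * g s = deriv u s := by
      intro s hs; rw [uIcc_of_le hr] at hs
      have hne : Real.sqrt (Ω s * Real.sqrt (W s)) ≠ 0 := (Real.sqrt_pos.2 (hposarg s hs)).ne'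
      simp only [hfdef, hgdef]
      rw [mul_assoc, mul_inv_cancel₀ hne, mul_one]
    have h1 : ∫ s in t₀..r, f s * g s = u r := by
      rw [intervalIntegral.integral_congr hfg, ← hur]
    have hf2 : ∀ s, f s ^ 2 = ψ s := by
      intro s
      have hs2 : Real.sqrt (Ω s * Real.sqrt (W s)) ^ 2 = Ω s * Real.sqrt (W s) :=
        Real.sq_sqrt (mul_nonneg (hΩpos s).le (Real.sqrt_nonneg _))
      simp only [hfdef, hψdef, hqdef, mul_pow, hs2]
      ring
    have h2 : ∫ s in t₀..r, f s ^ 2 = ∫ s in t₀..r, ψ s :=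
      intervalIntegral.integral_congr (fun s _ => hf2 s)
    have hgsq : ∀ s, g s ^ 2 = (Ω s)⁻¹ * (Real.sqrt (W s))⁻¹ := by
      intro s
      have hs2 : Real.sqrt (Ω s * Real.sqrt (W s)) ^ 2 = Ω s * Real.sqrt (W s) :=
        Real.sq_sqrt (mul_nonneg (hΩpos s).le (Real.sqrt_nonneg _))
      simp only [hgdef]
      rw [inv_pow, hs2, mul_inv]
    have hderiv2 : ∀ s ∈ uIcc t₀ r,
        HasDerivAt (fun y => 2 * Real.sqrt (W y)) ((Ω s)⁻¹ * (Real.sqrt (W s))⁻¹) s := by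
      intro s hs; rw [uIcc_of_le hr] at hs
      have h0 : W s ≠ 0 := (hWposIci s hs.1).ne'
      have h1 := ((Real.hasDerivAt_sqrt h0).comp s (hWd s)).const_mul (2:ℝ)
      refine h1.congr_deriv ?_
      have hWs0 : Real.sqrt (W s) ≠ 0 := (Real.sqrt_pos.2 (hWposIci s hs.1)).ne'
      ring
    have hint3 : IntervalIntegrable (fun s => (Ω s)⁻¹ * (Real.sqrt (W s))⁻¹) volume t₀ r := by
      apply ContinuousOn.intervalIntegrable
      rw [uIcc_of_le hr]
      exact (hΩinv.continuousOn).mul (ContinuousOn.inv₀ hsqrtW.continuousOn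
        (fun s hs => (Real.sqrt_pos.2 (hWposIci s hs.1)).ne'))
    have h3 : ∫ s in t₀..r, g s ^ 2 = 2*Real.sqrt (W r) - 2*Real.sqrt (W t₀) := by
      rw [intervalIntegral.integral_congr (fun s _ => hgsq s)]
      exact intervalIntegral.integral_eq_sub_of_hasDerivAt hderiv2 hint3
    have h3le : ∫ s in t₀..r, g s ^ 2 ≤ 2 * Real.sqrt (W r) := by
      rw [h3]
      nlinarith [Real.sqrt_nonneg (W t₀)]
    have hkey : (u r)^2 ≤ (∫ s in t₀..r, ψ s) * (2 * Real.sqrt (W r)) := by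
      rw [h1, h2] at hcs
      calc (u r)^2 ≤ (∫ s in t₀..r, ψ s) * ∫ s in t₀..r, g s^2 := hcs
      _ ≤ (∫ s in t₀..r, ψ s) * (2 * Real.sqrt (W r)) :=
          mul_le_mul_of_nonneg_left h3le hGnn
    calc (u r)^2 * Ω r ≤ ((∫ s in t₀..r, ψ s) * (2 * Real.sqrt (W r))) * Ω r :=
        mul_le_mul_of_nonneg_right hkey (hΩpos r).le
    _ = 2 * φ r * ∫ s in t₀..r, ψ s := by simp only [hφdef]; ring
  -- Step D
  have stepD : ∀ s, t < s →
      (∫⁻ r in Ici s, ENNReal.ofReal (φ r)) ≤ ENNReal.ofReal (2*K / Real.sqrt (W s)) := by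
    intro s hs
    set ρ : ℝ → ℝ := fun r => Ω r * (Real.sqrt (V r))⁻¹ with hρdef
    have hρd : ∀ x, HasDerivAt (fun y => (-2 : ℝ) * Real.sqrt (V y)) (ρ x) x := by
      intro x
      have h0 : V x ≠ 0 := (hVpos x).ne'
      have h1 := ((Real.hasDerivAt_sqrt h0).comp x (hVd x)).const_mul (-2:ℝ)
      refine h1.congr_deriv ?_
      have hVs0 : Real.sqrt (V x) ≠ 0 := (Real.sqrt_pos.2 (hVpos x)).ne'
      simp only [hρdef]
      ring
    have hρnn : ∀ x ∈ Ioi s, 0 ≤ ρ x := fun x _ =>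
      mul_nonneg (hΩpos x).le (inv_nonneg.2 (Real.sqrt_nonneg _))
    have htd : Tendsto (fun y => (-2:ℝ) * Real.sqrt (V y)) atTop (𝓝 0) := by
      have h1 : Tendsto (fun y => Real.sqrt (V y)) atTop (𝓝 (Real.sqrt 0)) :=
        (Real.continuous_sqrt.tendsto 0).comp hVtend
      have h2 := h1.const_mul (-2:ℝ)
      simpa using h2
    have hρint : IntegrableOn ρ (Ioi s) :=
      integrableOn_Ioi_deriv_of_nonneg' (fun x _ => hρd x) hρnn htd
    have hρval : ∫ x in Ioi s, ρ x = 2 * Real.sqrt (V s) := by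
      rw [integral_Ioi_of_hasDerivAt_of_nonneg' (fun x _ => hρd x) hρnn htd]
      ring
    have hφle : ∀ r, s ≤ r → φ r ≤ Real.sqrt K * ρ r := by
      intro r hr
      have hVr := hVpos r
      have hKr : W r ≤ K / V r := (le_div_iff₀ hVr).2 (hWVK r (hs.trans_le hr))
      have hsq : Real.sqrt (W r) ≤ Real.sqrt K * (Real.sqrt (V r))⁻¹ := by
        have := Real.sqrt_le_sqrt hKr
        rwa [Real.sqrt_div hK, div_eq_mul_inv] at this
      calc φ r = Ω r * Real.sqrt (W r) := rfl
      _ ≤ Ω r * (Real.sqrt K * (Real.sqrt (V r))⁻¹) :=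
          mul_le_mul_of_nonneg_left hsq (hΩpos r).le
      _ = Real.sqrt K * ρ r := by simp only [hρdef]; ring
    have hφintIoi : IntegrableOn φ (Ioi s) := by
      apply Integrable.mono (hρint.const_mul (Real.sqrt K)) hφc.aestronglyMeasurable.restrict
      refine (ae_restrict_iff' measurableSet_Ioi).2 (Eventually.of_forall (fun r hr => ?_))
      rw [Real.norm_eq_abs, Real.norm_eq_abs, abs_of_nonneg (hφ0 r), abs_of_nonneg
        (mul_nonneg (Real.sqrt_nonneg _) (hρnn r hr))]
      exact hφle r (le_of_lt hr)
    have hφint : IntegrableOn φ (Ici s) := by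
      rwa [integrableOn_Ici_iff_integrableOn_Ioi]
    have hWs : 0 < W s := hWpos s hs
    have hφval : ∫ x in Ici s, φ x ≤ 2 * K / Real.sqrt (W s) := by
      rw [setIntegral_congr_set (Ioi_ae_eq_Ici (a := s)).symm]
      have h1 : ∫ x in Ioi s, φ x ≤ ∫ x in Ioi s, Real.sqrt K * ρ x :=
        setIntegral_mono_on hφintIoi (hρint.const_mul _) measurableSet_Ioi
          (fun x hx => hφle x (le_of_lt hx))
      have h2 : ∫ x in Ioi s, Real.sqrt K * ρ x = Real.sqrt K * (2 * Real.sqrt (V s)) := by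
        rw [integral_const_mul, hρval]
      have hVs : V s ≤ K / W s := by
        rw [le_div_iff₀ hWs]
        have := hWVK s hs
        linarith [hWVK s hs, mul_comm (W s) (V s)]
      have h3 : Real.sqrt (V s) ≤ Real.sqrt K / Real.sqrt (W s) := by
        have := Real.sqrt_le_sqrt hVs
        rwa [Real.sqrt_div hK] at this
      have hsK := Real.sqrt_nonneg K
      have hsWs : 0 < Real.sqrt (W s) := Real.sqrt_pos.2 hWs
      calc ∫ x in Ioi s, φ x ≤ Real.sqrt K * (2 * Real.sqrt (V s)) := h1.trans (le_of_eq h2)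
      _ ≤ Real.sqrt K * (2 * (Real.sqrt K / Real.sqrt (W s))) := by nlinarith
      _ = 2 * K / Real.sqrt (W s) := by
          field_simp
          linarith [Real.sq_sqrt hK]
    calc ∫⁻ r in Ici s, ENNReal.ofReal (φ r)
        = ENNReal.ofReal (∫ r in Ici s, φ r) :=
          (ofReal_integral_eq_lintegral_ofReal hφint
            (Eventually.of_forall (fun x => hφ0 x))).symm
    _ ≤ ENNReal.ofReal (2*K / Real.sqrt (W s)) := ENNReal.ofReal_le_ofReal hφval
  -- measurability
  have hmq : Measurable fun r => ENNReal.ofReal (q r) := hqc.measurable.ennreal_ofReal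
  have hmφ : Measurable fun r => ENNReal.ofReal (φ r) := hφc.measurable.ennreal_ofReal
  have hmψ : Measurable fun r => ENNReal.ofReal (ψ r) := hψc.measurable.ennreal_ofReal
  have hψIoc : ∀ r : ℝ, IntegrableOn ψ (Ioc t₀ r) := fun r => hψc.integrableOn_Ioc
  set F : ℝ → ℝ≥0∞ := fun r => ∫⁻ s in Ioc t₀ r, ENNReal.ofReal (ψ s) with hFdef
  have hFmono : Monotone F := fun a b hab =>
    lintegral_mono_set (Ioc_subset_Ioc_right hab)
  have hFm : Measurable F := hFmono.measurable
  have hL1 : (∫⁻ r in Ioi t, ENNReal.ofReal ((u r)^2 * Ω r))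
      = ∫⁻ r in Ioi t₀, ENNReal.ofReal ((u r)^2 * Ω r) := by
    rw [← Ioc_union_Ioi_eq_Ioi ht₀.le,
      lintegral_union measurableSet_Ioi (Ioc_disjoint_Ioi le_rfl)]
    have hz : ∫⁻ r in Ioc t t₀, ENNReal.ofReal ((u r)^2 * Ω r) = 0 := by
      rw [setLIntegral_congr_fun measurableSet_Ioc
        (fun r hr => ?_), lintegral_zero]
      rw [hu0 r hr.2]
      norm_num
    rw [hz, zero_add]
  have hL2 : ∫⁻ r in Ioi t₀, ENNReal.ofReal ((u r)^2 * Ω r) ≤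
      ∫⁻ r in Ioi t₀, ENNReal.ofReal 2 * (ENNReal.ofReal (φ r) * F r) := by
    apply setLIntegral_mono (measurable_const.mul (hmφ.mul hFm))
    intro r hr
    have hA := stepA r (le_of_lt hr)
    calc ENNReal.ofReal ((u r)^2 * Ω r)
        ≤ ENNReal.ofReal (2 * φ r * ∫ s in t₀..r, ψ s) := ENNReal.ofReal_le_ofReal hA
    _ = ENNReal.ofReal 2 * (ENNReal.ofReal (φ r) * ENNReal.ofReal (∫ s in t₀..r, ψ s)) := by
        rw [ENNReal.ofReal_mul (by have := hφ0 r; positivity),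
          ENNReal.ofReal_mul (by norm_num : (0:ℝ) ≤ 2), mul_assoc]
    _ = ENNReal.ofReal 2 * (ENNReal.ofReal (φ r) * F r) := by
        rw [intervalIntegral.integral_of_le (le_of_lt hr),
          ofReal_integral_eq_lintegral_ofReal (hψIoc r)
            (Eventually.of_forall (fun x => hψ0 x))]
  have hL3 : ∫⁻ r in Ioi t₀, ENNReal.ofReal 2 * (ENNReal.ofReal (φ r) * F r)
      = ENNReal.ofReal 2 * ∫⁻ r in Ioi t₀, ENNReal.ofReal (φ r) * F r :=
    lintegral_const_mul _ (hmφ.mul hFm)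
  have hswap : ∫⁻ r in Ioi t₀, ENNReal.ofReal (φ r) * F r
      = ∫⁻ s in Ioi t₀, ENNReal.ofReal (ψ s) * ∫⁻ r in Ici s, ENNReal.ofReal (φ r) := by
    exact swap_aux t₀ (fun r => ENNReal.ofReal (φ r)) (fun s => ENNReal.ofReal (ψ s)) hmφ hmψ
  have hL4 : ∫⁻ s in Ioi t₀, ENNReal.ofReal (ψ s) * ∫⁻ r in Ici s, ENNReal.ofReal (φ r)
      ≤ ∫⁻ s in Ioi t₀, ENNReal.ofReal (ψ s) * ENNReal.ofReal (2*K / Real.sqrt (W s)) := by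
    apply setLIntegral_mono
      (hmψ.mul ((measurable_const.div (Real.continuous_sqrt.comp hWc).measurable).ennreal_ofReal))
    intro s hsmem
    exact mul_le_mul_right (stepD s (ht₀.trans hsmem)) _
  have hL5 : ∫⁻ s in Ioi t₀, ENNReal.ofReal (ψ s) * ENNReal.ofReal (2*K / Real.sqrt (W s))
      = ∫⁻ s in Ioi t₀, ENNReal.ofReal (2*K) * ENNReal.ofReal (q s) := by
    apply setLIntegral_congr_fun measurableSet_Ioi
    intro s hsmem
    beta_reduce
    rw [← ENNReal.ofReal_mul (hψ0 s), ← ENNReal.ofReal_mul (by positivity)]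
    congr 1
    have hWs0 : Real.sqrt (W s) ≠ 0 := (Real.sqrt_pos.2 (hWpos s (ht₀.trans hsmem))).ne'
    simp only [hψdef]
    field_simp
  have hL6 : ∫⁻ s in Ioi t₀, ENNReal.ofReal (2*K) * ENNReal.ofReal (q s)
      = ENNReal.ofReal (2*K) * ∫⁻ s in Ioi t₀, ENNReal.ofReal (q s) :=
    lintegral_const_mul _ hmq
  have hL7 : (∫⁻ s in Ioi t₀, ENNReal.ofReal (q s)) ≤ ∫⁻ s in Ioi t, ENNReal.ofReal (q s) :=
    lintegral_mono_set (Ioi_subset_Ioi ht₀.le)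
  calc (∫⁻ r in Ioi t, ENNReal.ofReal ((u r)^2 * Ω r))
      ≤ ENNReal.ofReal 2 * (ENNReal.ofReal (2*K) * ∫⁻ s in Ioi t₀, ENNReal.ofReal (q s)) := by
        rw [hL1]
        refine hL2.trans ?_
        rw [hL3, hswap]
        exact mul_le_mul_right (hL4.trans (le_of_eq (hL5.trans hL6))) _
  _ ≤ ENNReal.ofReal 2 * (ENNReal.ofReal (2*K) * ∫⁻ s in Ioi t, ENNReal.ofReal (q s)) :=
      mul_le_mul_right (mul_le_mul_right hL7 _) _
  _ = ENNReal.ofReal (4 * K) * ∫⁻ s in Ioi t, ENNReal.ofReal (q s) := by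
      rw [← mul_assoc, ← ENNReal.ofReal_mul (by norm_num : (0:ℝ) ≤ 2)]
      congr 2
      ring

/-- Weighted Hardy inequality (finite-volume case): for a positive continuous weight ω̄ on
[0,∞), t ≥ 0, and u smooth compactly supported in (t,∞),
∫_t^∞ u² ω̄ ≤ 4 · sup_{s>t}(∫_t^s ω̄⁻¹ · ∫_s^∞ ω̄) · ∫_t^∞ (u')² ω̄,
with the convention (via ℝ≥0∞) that the right side is ∞ if the sup is infinite. -/
theorem stmt0 (ω : ℝ → ℝ) (t : ℝ) (ht : 0 ≤ t)
    (hωc : ContinuousOn ω (Ici 0)) (hωpos : ∀ r ∈ Ici (0:ℝ), 0 < ω r)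
    (u : ℝ → ℝ) (hu : ContDiff ℝ (⊤ : ℕ∞) u) (hcpt : HasCompactSupport u)
    (hsupp : tsupport u ⊆ Ioi t) :
    (∫⁻ r in Ioi t, ENNReal.ofReal ((u r)^2 * ω r)) ≤
      4 * (⨆ s ∈ Ioi t, (∫⁻ r in Ioc t s, ENNReal.ofReal (ω r)⁻¹) *
            ∫⁻ r in Ioi s, ENNReal.ofReal (ω r)) *
        ∫⁻ r in Ioi t, ENNReal.ofReal ((deriv u r)^2 * ω r) := by
  classical
  have hud : Differentiable ℝ u := hu.differentiable (by simp)
  have hudc : Continuous (deriv u) := hu.continuous_deriv (by simp)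
  set Ω : ℝ → ℝ := fun r => ω (max r 0) with hΩdef
  have hΩc : Continuous Ω :=
    hωc.comp_continuous (continuous_id.max continuous_const) (fun x => le_max_right x 0)
  have hΩpos : ∀ r, 0 < Ω r := fun r => hωpos _ (le_max_right r 0)
  have hΩeq : ∀ r : ℝ, 0 ≤ r → Ω r = ω r := fun r hr => by
    simp only [hΩdef]; rw [max_eq_left hr]
  have hΩinv : Continuous fun x => (Ω x)⁻¹ := hΩc.inv₀ (fun x => (hΩpos x).ne')
  -- rewrite ω to Ω everywhere
  have hLeq : (∫⁻ r in Ioi t, ENNReal.ofReal ((u r)^2 * ω r))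
      = ∫⁻ r in Ioi t, ENNReal.ofReal ((u r)^2 * Ω r) :=
    setLIntegral_congr_fun measurableSet_Ioi (fun r hr => by
      rw [hΩeq r (ht.trans hr.le)])
  have hIeq : (∫⁻ r in Ioi t, ENNReal.ofReal ((deriv u r)^2 * ω r))
      = ∫⁻ r in Ioi t, ENNReal.ofReal ((deriv u r)^2 * Ω r) :=
    setLIntegral_congr_fun measurableSet_Ioi (fun r hr => by
      rw [hΩeq r (ht.trans hr.le)])
  have hBeq : (⨆ s ∈ Ioi t, (∫⁻ r in Ioc t s, ENNReal.ofReal (ω r)⁻¹) *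
        ∫⁻ r in Ioi s, ENNReal.ofReal (ω r))
      = ⨆ s ∈ Ioi t, (∫⁻ r in Ioc t s, ENNReal.ofReal (Ω r)⁻¹) *
        ∫⁻ r in Ioi s, ENNReal.ofReal (Ω r) := by
    refine iSup_congr fun s => iSup_congr fun hs => ?_
    congr 1
    · exact setLIntegral_congr_fun measurableSet_Ioc (fun r hr => by
        rw [hΩeq r (ht.trans hr.1.le)])
    · exact setLIntegral_congr_fun measurableSet_Ioi (fun r hr => by
        rw [hΩeq r (ht.trans ((mem_Ioi.1 hs).trans hr).le)])
  rw [hLeq, hIeq, hBeq]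
  set B := ⨆ s ∈ Ioi t, (∫⁻ r in Ioc t s, ENNReal.ofReal (Ω r)⁻¹) *
      ∫⁻ r in Ioi s, ENNReal.ofReal (Ω r) with hBdef
  set I := ∫⁻ r in Ioi t, ENNReal.ofReal ((deriv u r)^2 * Ω r) with hIdef
  -- helper: LHS = 0 when u vanishes on Ioi t
  have hLHS0 : (∀ x ∈ Ioi t, u x = 0) →
      (∫⁻ r in Ioi t, ENNReal.ofReal ((u r)^2 * Ω r)) = 0 := by
    intro h0
    rw [setLIntegral_congr_fun measurableSet_Ioi
      (fun r hr => ?_), lintegral_zero]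
    rw [h0 r hr]
    norm_num
  by_cases hI : I = 0
  · -- derivative vanishes a.e., hence u ≡ 0 on Ioi t
    have hmq : Measurable fun r => ENNReal.ofReal ((deriv u r)^2 * Ω r) :=
      (((hudc.pow 2).mul hΩc)).measurable.ennreal_ofReal
    have hae : ∀ᵐ r ∂volume, r ∈ Ioi t → ENNReal.ofReal ((deriv u r)^2 * Ω r) = 0 :=
      (ae_restrict_iff' measurableSet_Ioi).1 ((lintegral_eq_zero_iff hmq).1 hI)
    set E : Set ℝ := Ioi t ∩ (deriv u)⁻¹' ({0}ᶜ) with hEdef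
    have hEopen : IsOpen E := isOpen_Ioi.inter (isOpen_compl_singleton.preimage hudc)
    have hEnull : volume E = 0 := by
      rw [ae_iff] at hae
      refine measure_mono_null (fun x hx => ?_) hae
      have hne : deriv u x ≠ 0 := hx.2
      have hpos : 0 < (deriv u x)^2 * Ω x :=
        mul_pos ((sq_nonneg _).lt_of_ne (Ne.symm (pow_ne_zero 2 hne))) (hΩpos x)
      simp only [mem_setOf_eq]
      intro himp
      have h0 := himp hx.1
      rw [ENNReal.ofReal_eq_zero] at h0
      linarith
    have hE : E = ∅ := by
      by_contra h
      exact absurd hEnull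
        (ne_of_gt (hEopen.measure_pos volume (nonempty_iff_ne_empty.2 h)))
    have hderiv0 : ∀ x ∈ Ioi t, deriv u x = 0 := by
      intro x hx
      by_contra h
      exact (eq_empty_iff_forall_notMem.1 hE x) ⟨hx, h⟩
    have hu0 : ∀ x ∈ Ioi t, u x = 0 := by
      intro x hx
      obtain ⟨b, hb⟩ := hcpt.bddAbove
      set M := max x b + 1 with hMdef
      have hxM : x ≤ M := le_trans (le_max_left x b) (by simp [hMdef])
      have huM : u M = 0 := by
        apply image_eq_zero_of_notMem_tsupport
        intro hM
        have h1 := hb hM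
        have h2 : b + 1 ≤ M := by simp only [hMdef]; linarith [le_max_right x b]
        linarith
      have hftc : ∫ s in x..M, deriv u s = u M - u x :=
        intervalIntegral.integral_deriv_eq_sub (fun y _ => hud.differentiableAt)
          (hudc.intervalIntegrable _ _)
      have hzero : ∫ s in x..M, deriv u s = 0 := by
        rw [intervalIntegral.integral_congr (g := fun _ => (0:ℝ)) (fun y hy => ?_),
          intervalIntegral.integral_zero]
        rw [uIcc_of_le hxM] at hy
        exact hderiv0 y (lt_of_lt_of_le hx hy.1)
      rw [huM, hzero] at hftc
      linarith
    rw [hLHS0 hu0]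
    exact zero_le
  by_cases hB : B = ⊤
  · rw [hB]
    have hT : (4 : ℝ≥0∞) * ⊤ * I = ⊤ := by
      rw [ENNReal.mul_top (by norm_num : (4:ℝ≥0∞) ≠ 0)]
      exact ENNReal.top_mul hI
    rw [hT]
    exact le_top
  -- main case: B < ∞
  -- integrability of Ω on Ioi t
  obtain ⟨c, hcmem, hcmax⟩ :=
    isCompact_Icc.exists_isMaxOn (nonempty_Icc.2 (by linarith : t ≤ t+1)) hΩc.continuousOn
  have hWlb : ENNReal.ofReal (Ω c)⁻¹ * volume (Ioc t (t+1))
      ≤ ∫⁻ r in Ioc t (t+1), ENNReal.ofReal (Ω r)⁻¹ := by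
    rw [← setLIntegral_const (Ioc t (t+1)) (ENNReal.ofReal (Ω c)⁻¹)]
    refine setLIntegral_mono (hΩinv.measurable.ennreal_ofReal) (fun r hr => ?_)
    exact ENNReal.ofReal_le_ofReal
      (inv_anti₀ (hΩpos r) (hcmax (Ioc_subset_Icc_self hr)))
  have hvol : volume (Ioc t (t+1)) = 1 := by
    rw [Real.volume_Ioc]
    norm_num
  have hWne : (∫⁻ r in Ioc t (t+1), ENNReal.ofReal (Ω r)⁻¹) ≠ 0 := by
    intro h0
    rw [h0, hvol, mul_one] at hWlb
    exact absurd (le_antisymm hWlb zero_le)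
      (ne_of_gt (ENNReal.ofReal_pos.2 (inv_pos.2 (hΩpos c))))
  have hterm : (∫⁻ r in Ioc t (t+1), ENNReal.ofReal (Ω r)⁻¹) *
      (∫⁻ r in Ioi (t+1), ENNReal.ofReal (Ω r)) ≤ B :=
    le_iSup₂ (f := fun s (_ : s ∈ Ioi t) => (∫⁻ r in Ioc t s, ENNReal.ofReal (Ω r)⁻¹) *
      ∫⁻ r in Ioi s, ENNReal.ofReal (Ω r)) (t+1) (mem_Ioi.2 (by linarith))
  have hVfin : (∫⁻ r in Ioi (t+1), ENNReal.ofReal (Ω r)) ≠ ⊤ := by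
    intro htop
    rw [htop, ENNReal.mul_top hWne] at hterm
    exact hB (top_le_iff.1 hterm)
  have hIocfin : (∫⁻ r in Ioc t (t+1), ENNReal.ofReal (Ω r)) ≠ ⊤ := by
    have hub : (∫⁻ r in Ioc t (t+1), ENNReal.ofReal (Ω r))
        ≤ ENNReal.ofReal (Ω c) * volume (Ioc t (t+1)) := by
      rw [← setLIntegral_const (Ioc t (t+1)) (ENNReal.ofReal (Ω c))]
      exact setLIntegral_mono measurable_const (fun r hr =>
        ENNReal.ofReal_le_ofReal (hcmax (Ioc_subset_Icc_self hr)))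
    rw [hvol, mul_one] at hub
    exact ne_top_of_le_ne_top ENNReal.ofReal_ne_top hub
  have hfin : (∫⁻ r in Ioi t, ENNReal.ofReal (Ω r)) ≠ ⊤ := by
    rw [← Ioc_union_Ioi_eq_Ioi (by linarith : t ≤ t+1),
      lintegral_union measurableSet_Ioi (Ioc_disjoint_Ioi le_rfl)]
    exact ENNReal.add_ne_top.2 ⟨hIocfin, hVfin⟩
  have hΩint : IntegrableOn Ω (Ioi t) := by
    refine ⟨hΩc.aestronglyMeasurable.restrict, ?_⟩
    rw [hasFiniteIntegral_iff_ofReal (Eventually.of_forall (fun x => (hΩpos x).le))]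
    exact lt_top_iff_ne_top.2 hfin
  set K := B.toReal with hKdef
  have hKnn : (0:ℝ) ≤ K := ENNReal.toReal_nonneg
  have hWVreal : ∀ s, t < s → (∫ x in t..s, (Ω x)⁻¹) * (∫ x in Ioi s, Ω x) ≤ K := by
    intro s hs
    have h1 : ENNReal.ofReal (∫ x in t..s, (Ω x)⁻¹)
        = ∫⁻ r in Ioc t s, ENNReal.ofReal (Ω r)⁻¹ := by
      rw [intervalIntegral.integral_of_le hs.le]
      exact ofReal_integral_eq_lintegral_ofReal hΩinv.integrableOn_Ioc
        (Eventually.of_forall fun x => inv_nonneg.2 (hΩpos x).le)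
    have h2 : ENNReal.ofReal (∫ x in Ioi s, Ω x)
        = ∫⁻ r in Ioi s, ENNReal.ofReal (Ω r) :=
      ofReal_integral_eq_lintegral_ofReal (hΩint.mono_set (Ioi_subset_Ioi hs.le))
        (Eventually.of_forall fun x => (hΩpos x).le)
    have hle : (∫⁻ r in Ioc t s, ENNReal.ofReal (Ω r)⁻¹) *
        (∫⁻ r in Ioi s, ENNReal.ofReal (Ω r)) ≤ B :=
      le_iSup₂ (f := fun s' (_ : s' ∈ Ioi t) => (∫⁻ r in Ioc t s', ENNReal.ofReal (Ω r)⁻¹) *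
        ∫⁻ r in Ioi s', ENNReal.ofReal (Ω r)) s (mem_Ioi.2 hs)
    rw [← h1, ← h2, ← ENNReal.ofReal_mul (intervalIntegral.integral_nonneg hs.le
      (fun x _ => inv_nonneg.2 (hΩpos x).le)), ← ENNReal.ofReal_toReal hB] at hle
    exact (ENNReal.ofReal_le_ofReal_iff hKnn).1 hle
  -- find t₀
  by_cases hts : tsupport u = ∅
  · have hu0 : ∀ x ∈ Ioi t, u x = 0 := fun x _ =>
      image_eq_zero_of_notMem_tsupport (by simp [hts])
    rw [hLHS0 hu0]
    exact zero_le
  have hne : (tsupport u).Nonempty := nonempty_iff_ne_empty.2 hts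
  have hm : sInf (tsupport u) ∈ tsupport u := hcpt.sInf_mem hne
  have htm : t < sInf (tsupport u) := hsupp hm
  set t₀ := (t + sInf (tsupport u)) / 2 with ht₀def
  have ht₀ : t < t₀ := by simp only [ht₀def]; linarith
  have ht₀m : t₀ < sInf (tsupport u) := by simp only [ht₀def]; linarith
  have hu0 : ∀ x, x ≤ t₀ → u x = 0 := by
    intro x hx
    apply image_eq_zero_of_notMem_tsupport
    intro hxs
    have := csInf_le hcpt.bddBelow hxs
    linarith
  have hmain := main_aux Ω hΩc hΩpos t t₀ ht₀ u hu hu0 hΩint K hKnn hWVreal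
  refine hmain.trans ?_
  apply mul_le_mul_left
  rw [ENNReal.ofReal_mul (by norm_num : (0:ℝ) ≤ 4)]
  refine mul_le_mul' (le_of_eq (ENNReal.ofReal_ofNat 4)) (le_of_eq (ENNReal.ofReal_toReal hB))
end

section
/- Let ω̄ : [0,∞) → (0,∞) be continuous. Then lim_{t→∞} sup_{s>t} ( ∫_s^∞ ω̄(r)⁻¹ dr · ∫_t^s ω̄(r) dr ) = 0 if and only if lim_{s→∞} ( ∫_s^∞ ω̄(r)⁻¹ dr · ∫_0^s ω̄(r) dr ) = 0, where in the first condition the supremum is over all s > t. -/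
/-!
Write `B s = ∫_s^∞ ω⁻¹` and `A t s = ∫_t^s ω`. Since `A t s ≤ A 0 s`, the second condition
bounds the supremum in the first. Conversely, the first condition makes `B` finite somewhere
(as `A t (t + 1) > 0`), so `B s → 0`; splitting `A 0 s = A 0 t + A t s` at a fixed large `t`,
the first summand times `B s` tends to `0` and the second times `B s` is controlled by the
supremum at `t`.
-/

open MeasureTheory Set Filter Topology
open scoped ENNReal

theorem tendsto_measure_Ioi_atTop (μ : Measure ℝ) {a : ℝ} (ha : μ (Ioi a) ≠ ∞) :
    Tendsto (fun s => μ (Ioi s)) atTop (𝓝 0) := by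
  have hempty : (⋂ s : ℝ, Ioi s) = ∅ :=
    eq_empty_of_forall_notMem fun x hx => lt_irrefl x (mem_iInter.1 hx x)
  simpa [Function.comp_def, hempty] using tendsto_measure_iInter_atTop (μ := μ)
    (fun s => measurableSet_Ioi.nullMeasurableSet) (fun _ _ h => Ioi_subset_Ioi h) ⟨a, ha⟩

theorem lintegral_Ioc_ofReal_eq_ofReal_intervalIntegral {f : ℝ → ℝ} {a b : ℝ} (hab : a ≤ b)
    (hf : IntegrableOn f (Ioc a b)) (hf₀ : ∀ x ∈ Ioc a b, 0 ≤ f x) :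
    ∫⁻ r in Ioc a b, ENNReal.ofReal (f r) = ENNReal.ofReal (∫ r in a..b, f r) := by
  rw [intervalIntegral.integral_of_le hab, ofReal_integral_eq_lintegral_ofReal hf
    ((ae_restrict_iff' measurableSet_Ioc).2 (Eventually.of_forall hf₀))]

section

variable {μ : Measure ℝ} {u v : ℝ → ℝ≥0∞} {a : ℝ}

theorem tendsto_iSup_mul_lintegral_Ioc_of_tendsto
    (h : Tendsto (fun s => (∫⁻ r in Ioi s, u r ∂μ) * ∫⁻ r in Ioc a s, v r ∂μ) atTop (𝓝 0)) :
    Tendsto (fun t => ⨆ s ∈ Ioi t, (∫⁻ r in Ioi s, u r ∂μ) * ∫⁻ r in Ioc t s, v r ∂μ)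
      atTop (𝓝 0) := by
  rw [ENNReal.tendsto_nhds_zero] at h ⊢
  intro ε hε
  obtain ⟨S, hS⟩ := (h ε hε).exists_forall_of_atTop
  filter_upwards [eventually_ge_atTop (max S a)] with t ht
  refine iSup₂_le fun s (hs : t < s) => ?_
  calc (∫⁻ r in Ioi s, u r ∂μ) * ∫⁻ r in Ioc t s, v r ∂μ
      ≤ (∫⁻ r in Ioi s, u r ∂μ) * ∫⁻ r in Ioc a s, v r ∂μ :=
        mul_le_mul_right (lintegral_mono_set
          (Ioc_subset_Ioc_left ((le_max_right S a).trans ht))) _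
    _ ≤ ε := hS s ((le_max_left S a).trans (ht.trans hs.le))

theorem tendsto_mul_lintegral_Ioc_of_tendsto_iSup
    (hfin : ∀ᶠ t in atTop, ∫⁻ r in Ioc a t, v r ∂μ ≠ ∞)
    (hpos : ∀ᶠ t in atTop, ∫⁻ r in Ioc t (t + 1), v r ∂μ ≠ 0)
    (h : Tendsto (fun t => ⨆ s ∈ Ioi t, (∫⁻ r in Ioi s, u r ∂μ) * ∫⁻ r in Ioc t s, v r ∂μ)
      atTop (𝓝 0)) :
    Tendsto (fun s => (∫⁻ r in Ioi s, u r ∂μ) * ∫⁻ r in Ioc a s, v r ∂μ) atTop (𝓝 0) := by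
  rw [ENNReal.tendsto_nhds_zero] at h ⊢
  have htail : Tendsto (fun s => ∫⁻ r in Ioi s, u r ∂μ) atTop (𝓝 0) := by
    obtain ⟨t, ht, hvt⟩ := ((h 1 one_pos).and hpos).exists
    have hprod : (∫⁻ r in Ioi (t + 1), u r ∂μ) * ∫⁻ r in Ioc t (t + 1), v r ∂μ ≠ ∞ :=
      ne_top_of_le_ne_top ENNReal.one_ne_top ((le_iSup₂ (t + 1) (lt_add_one t)).trans ht)
    have hut : ∫⁻ r in Ioi (t + 1), u r ∂μ ≠ ∞ := fun hu => hprod (by rw [hu, ENNReal.top_mul hvt])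
    simp_rw [← withDensity_apply u measurableSet_Ioi] at hut ⊢
    exact tendsto_measure_Ioi_atTop _ hut
  intro ε hε
  have hε₂ : 0 < ε / 2 := ENNReal.half_pos hε.ne'
  obtain ⟨t, hsup, hvt⟩ := ((h (ε / 2) hε₂).and hfin).exists
  have hhead : Tendsto (fun s => (∫⁻ r in Ioi s, u r ∂μ) * ∫⁻ r in Ioc a t, v r ∂μ)
      atTop (𝓝 0) := by
    simpa using ENNReal.Tendsto.mul_const htail (Or.inr hvt)
  filter_upwards [eventually_gt_atTop t, ENNReal.tendsto_nhds_zero.1 hhead (ε / 2) hε₂]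
    with s hts hs
  calc (∫⁻ r in Ioi s, u r ∂μ) * ∫⁻ r in Ioc a s, v r ∂μ
      ≤ (∫⁻ r in Ioi s, u r ∂μ) * ((∫⁻ r in Ioc a t, v r ∂μ) + ∫⁻ r in Ioc t s, v r ∂μ) :=
        mul_le_mul_right ((lintegral_mono_set Ioc_subset_Ioc_union_Ioc).trans
          (lintegral_union_le _ _ _)) _
    _ = (∫⁻ r in Ioi s, u r ∂μ) * (∫⁻ r in Ioc a t, v r ∂μ)
          + (∫⁻ r in Ioi s, u r ∂μ) * ∫⁻ r in Ioc t s, v r ∂μ := mul_add _ _ _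
    _ ≤ ε / 2 + ε / 2 := add_le_add hs ((le_iSup₂ s hts).trans hsup)
    _ = ε := ENNReal.add_halves ε

end

/-- Corollary 3.2, infinite-volume case:
lim_{t→∞} sup_{s>t} (∫_s^∞ ω̄⁻¹ · ∫_t^s ω̄) = 0 ↔ lim_{s→∞} (∫_s^∞ ω̄⁻¹ · ∫_0^s ω̄) = 0. -/
theorem stmt2 (ω : ℝ → ℝ)
    (hωc : ContinuousOn ω (Ici 0)) (hωpos : ∀ r ∈ Ici (0:ℝ), 0 < ω r) :
    Tendsto (fun t : ℝ => ⨆ s ∈ Ioi t, (∫⁻ r in Ioi s, ENNReal.ofReal (ω r)⁻¹) *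
        ∫⁻ r in Ioc t s, ENNReal.ofReal (ω r)) atTop (nhds 0)
      ↔ Tendsto (fun s : ℝ => (∫⁻ r in Ioi s, ENNReal.ofReal (ω r)⁻¹) *
        ∫⁻ r in Ioc 0 s, ENNReal.ofReal (ω r)) atTop (nhds 0) := by
  have hωc' : ∀ {t s : ℝ}, 0 ≤ t → ContinuousOn ω (Icc t s) := fun ht =>
    hωc.mono fun x hx => ht.trans hx.1
  have hωint : ∀ {t s : ℝ}, 0 ≤ t → t ≤ s →
      ∫⁻ r in Ioc t s, ENNReal.ofReal (ω r) = ENNReal.ofReal (∫ r in t..s, ω r) :=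
    fun ht hts => lintegral_Ioc_ofReal_eq_ofReal_intervalIntegral hts
      ((hωc' ht).integrableOn_Icc.mono_set Ioc_subset_Icc_self)
      fun x hx => (hωpos x (ht.trans hx.1.le)).le
  refine ⟨tendsto_mul_lintegral_Ioc_of_tendsto_iSup ?_ ?_, tendsto_iSup_mul_lintegral_Ioc_of_tendsto⟩
  · filter_upwards [eventually_ge_atTop 0] with t ht
    rw [hωint le_rfl ht]
    exact ENNReal.ofReal_ne_top
  · filter_upwards [eventually_ge_atTop 0] with t ht
    rw [hωint ht (lt_add_one t).le]
    exact (ENNReal.ofReal_pos.2 (intervalIntegral.intervalIntegral_pos_of_pos_on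
      ((hωc' ht).intervalIntegrable_of_Icc (lt_add_one t).le)
      (fun x hx => hωpos x (ht.trans hx.1.le)) (lt_add_one t))).ne'
end

section
/- Let ω̄ : [0,∞) → (0,∞) be continuous. Then lim_{t→∞} sup_{s>t} ( ∫_t^s ω̄(r)⁻¹ dr · ∫_s^∞ ω̄(r) dr ) = 0 if and only if lim_{s→∞} ( ∫_0^s ω̄(r)⁻¹ dr · ∫_s^∞ ω̄(r) dr ) = 0. -/
/-!
Write `G t s = ∫_t^s ω⁻¹` and `T s = ∫_s^∞ ω`. Since `G t s ≤ G 0 s` for `t ≥ 0`, the second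
limit implies the first. Conversely, `G 0 s * T s = G 0 t * T s + G t s * T s`: the first limit
forces `T` to be finite somewhere (because `G t (t + 1) > 0`), hence `T s → 0`, so for a fixed
large `t` the first summand is eventually small and the second is bounded by the supremum.
-/

open MeasureTheory Set Filter Topology
open scoped ENNReal

lemma setLIntegral_pos_of_forall_pos {α : Type*} [MeasurableSpace α] {μ : Measure α} {s : Set α}
    {f : α → ℝ≥0∞} (hs : MeasurableSet s) (hμs : μ s ≠ 0) (hf : AEMeasurable f (μ.restrict s))
    (hpos : ∀ x ∈ s, 0 < f x) : 0 < ∫⁻ x in s, f x ∂μ := by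
  refine pos_iff_ne_zero.2 fun h => hμs ?_
  rw [setLIntegral_eq_zero_iff' hs hf] at h
  exact measure_eq_zero_iff_ae_notMem.2 (h.mono fun x hx hxs => (hpos x hxs).ne' (hx hxs))

lemma tendsto_setLIntegral_Ioi_atTop {f : ℝ → ℝ≥0∞} {a : ℝ} (ha : ∫⁻ r in Ioi a, f r ≠ ∞) :
    Tendsto (fun s => ∫⁻ r in Ioi s, f r) atTop (𝓝 0) := by
  have h := tendsto_measure_iInter_atTop (μ := volume.withDensity f) (s := Ioi)
    (fun _ => measurableSet_Ioi.nullMeasurableSet) (fun _ _ => Ioi_subset_Ioi)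
    ⟨a, by rwa [withDensity_apply _ measurableSet_Ioi]⟩
  have hempty : ⋂ s : ℝ, Ioi s = ∅ := iInter_eq_empty_iff.2 fun x => ⟨x, lt_irrefl x⟩
  rw [hempty, measure_empty] at h
  exact h.congr fun s => withDensity_apply _ measurableSet_Ioi

lemma tendsto_iSup_Ioi_atTop {F : ℝ → ℝ≥0∞} (h : Tendsto F atTop (𝓝 0)) :
    Tendsto (fun t => ⨆ s ∈ Ioi t, F s) atTop (𝓝 0) := by
  rw [ENNReal.tendsto_nhds_zero] at h ⊢
  intro ε hε
  obtain ⟨t₀, ht₀⟩ := eventually_atTop.1 (h ε hε)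
  filter_upwards [eventually_ge_atTop t₀] with t ht
  exact iSup₂_le fun s hs => ht₀ s (ht.trans hs.le)

section

variable {f g : ℝ → ℝ≥0∞} {a : ℝ}

lemma lintegral_Ioc_mul_le_add_iSup {t s : ℝ} (hat : a ≤ t) (hts : t < s) :
    (∫⁻ r in Ioc a s, g r) * ∫⁻ r in Ioi s, f r ≤
      (∫⁻ r in Ioc a t, g r) * (∫⁻ r in Ioi s, f r) +
        ⨆ s' ∈ Ioi t, (∫⁻ r in Ioc t s', g r) * ∫⁻ r in Ioi s', f r := by
  rw [← Ioc_union_Ioc_eq_Ioc hat hts.le,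
    lintegral_union measurableSet_Ioc (Ioc_disjoint_Ioc_of_le le_rfl), add_mul]
  gcongr
  exact le_iSup₂_of_le (f := fun s' _ => (∫⁻ r in Ioc t s', g r) * ∫⁻ r in Ioi s', f r) s hts le_rfl

lemma iSup_lintegral_Ioc_mul_le {t : ℝ} (hat : a ≤ t) :
    ⨆ s ∈ Ioi t, (∫⁻ r in Ioc t s, g r) * ∫⁻ r in Ioi s, f r ≤
      ⨆ s ∈ Ioi t, (∫⁻ r in Ioc a s, g r) * ∫⁻ r in Ioi s, f r := by
  gcongr with s

theorem tendsto_iSup_lintegral_Ioc_mul_iff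
    (hg_fin : ∀ s, ∫⁻ r in Ioc a s, g r ≠ ∞)
    (hg_pos : ∀ t s, a ≤ t → t < s → 0 < ∫⁻ r in Ioc t s, g r) :
    Tendsto (fun t => ⨆ s ∈ Ioi t, (∫⁻ r in Ioc t s, g r) * ∫⁻ r in Ioi s, f r) atTop (𝓝 0)
      ↔ Tendsto (fun s => (∫⁻ r in Ioc a s, g r) * ∫⁻ r in Ioi s, f r) atTop (𝓝 0) := by
  refine ⟨fun h => ?_, fun h => ?_⟩
  · rw [ENNReal.tendsto_nhds_zero] at h ⊢
    have htail : Tendsto (fun s => ∫⁻ r in Ioi s, f r) atTop (𝓝 0) := by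
      obtain ⟨t, ht1, hat⟩ := ((h 1 one_pos).and (eventually_ge_atTop a)).exists
      refine tendsto_setLIntegral_Ioi_atTop (a := t + 1) fun htop => ?_
      have hle := (le_iSup₂_of_le (f := fun s _ => (∫⁻ r in Ioc t s, g r) * ∫⁻ r in Ioi s, f r)
        (t + 1) (lt_add_one t) le_rfl).trans ht1
      rw [htop, ENNReal.mul_top (hg_pos t (t + 1) hat (lt_add_one t)).ne'] at hle
      exact ENNReal.one_ne_top (top_le_iff.1 hle)
    intro ε hε
    obtain ⟨t, ht, hat⟩ :=
      ((h (ε / 2) (ENNReal.half_pos hε.ne')).and (eventually_ge_atTop a)).exists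
    have hhead : Tendsto (fun s => (∫⁻ r in Ioc a t, g r) * ∫⁻ r in Ioi s, f r) atTop (𝓝 0) := by
      simpa using ENNReal.Tendsto.const_mul htail (Or.inr (hg_fin t))
    filter_upwards [ENNReal.tendsto_nhds_zero.1 hhead (ε / 2) (ENNReal.half_pos hε.ne'),
      eventually_gt_atTop t] with s hs hts
    calc _ ≤ _ := lintegral_Ioc_mul_le_add_iSup hat hts
      _ ≤ ε / 2 + ε / 2 := add_le_add hs ht
      _ = ε := ENNReal.add_halves ε
  · exact tendsto_of_tendsto_of_tendsto_of_le_of_le' tendsto_const_nhds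
      (tendsto_iSup_Ioi_atTop h) (.of_forall fun _ => zero_le)
      ((eventually_ge_atTop a).mono fun _ => iSup_lintegral_Ioc_mul_le)

end

/-- Corollary 3.2, finite-volume case:
lim_{t→∞} sup_{s>t} (∫_t^s ω̄⁻¹ · ∫_s^∞ ω̄) = 0 ↔ lim_{s→∞} (∫_0^s ω̄⁻¹ · ∫_s^∞ ω̄) = 0. -/
theorem stmt3 (ω : ℝ → ℝ)
    (hωc : ContinuousOn ω (Ici 0)) (hωpos : ∀ r ∈ Ici (0:ℝ), 0 < ω r) :
    Tendsto (fun t : ℝ => ⨆ s ∈ Ioi t, (∫⁻ r in Ioc t s, ENNReal.ofReal (ω r)⁻¹) *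
        ∫⁻ r in Ioi s, ENNReal.ofReal (ω r)) atTop (nhds 0)
      ↔ Tendsto (fun s : ℝ => (∫⁻ r in Ioc 0 s, ENNReal.ofReal (ω r)⁻¹) *
        ∫⁻ r in Ioi s, ENNReal.ofReal (ω r)) atTop (nhds 0) := by
  have hinv : ContinuousOn (fun r => (ω r)⁻¹) (Ici 0) := hωc.inv₀ fun r hr => (hωpos r hr).ne'
  have hsub : ∀ {t s : ℝ}, 0 ≤ t → Icc t s ⊆ Ici 0 := fun ht _ hr => ht.trans hr.1
  refine tendsto_iSup_lintegral_Ioc_mul_iff (fun s => ?_) fun t s ht hts => ?_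
  · exact ((hinv.mono (hsub le_rfl)).integrableOn_Icc.mono_set Ioc_subset_Icc_self)
      |>.setLIntegral_lt_top.ne
  · refine setLIntegral_pos_of_forall_pos measurableSet_Ioc (by simpa using hts)
      ((hinv.mono (Ioc_subset_Icc_self.trans (hsub ht))).aemeasurable
        measurableSet_Ioc).ennreal_ofReal
      fun r hr => ENNReal.ofReal_pos.2 (inv_pos.2 (hωpos r (hsub ht (Ioc_subset_Icc_self hr))))
end

section
/- Let ω̄ : [0,∞) → (0,∞) be continuous, and suppose that the limit L = lim_{s→∞} ω̄(s)² · (∫_s^∞ ω̄(r)⁻¹ dr)² exists in [0,∞]. If lim_{s→∞} ∫_s^∞ ω̄(r)⁻¹ dr · ∫_0^s ω̄(r) dr = 0 and ∫_0^∞ ω̄ dr = ∞, then lim_{s→∞} (d/ds) ln ∫_s^∞ ω̄(r)⁻¹ dr = -∞, i.e. lim_{s→∞} ω̄(s)⁻¹ / ∫_s^∞ ω̄(r)⁻¹ dr = ∞. -/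
/-!
Write `G s = ∫ₛ^∞ ω⁻¹` and `v s = ∫₀ˢ ω`. If `c ≤ ω G` on a tail where also `v G ≤ c² / 2`,
then `v / ω ≤ c / 2`, so `(v G)' = ω G - v / ω ≥ c / 2` and `v G → ∞`, contradicting `v G → 0`.
Hence `ω G` is frequently small; as `(ω G)²` converges, `ω G → 0`, i.e. `ω⁻¹ / G → ∞`.
-/

open MeasureTheory Set Filter
open scoped ENNReal Topology

theorem ofReal_intervalIntegral_eq_setLIntegral_Ioc {f : ℝ → ℝ} {a b : ℝ} (hab : a ≤ b)
    (hf : ContinuousOn f (Icc a b)) (hf0 : ∀ r ∈ Ioc a b, 0 ≤ f r) :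
    ENNReal.ofReal (∫ r in a..b, f r) = ∫⁻ r in Ioc a b, ENNReal.ofReal (f r) := by
  rw [intervalIntegral.integral_of_le hab]
  exact ofReal_integral_eq_lintegral_ofReal (hf.integrableOn_Icc.mono_set Ioc_subset_Icc_self)
    (ae_restrict_of_forall_mem measurableSet_Ioc hf0)

theorem hasDerivAt_intervalIntegral_of_continuousOn_Ici {f : ℝ → ℝ} {a x : ℝ}
    (hf : ContinuousOn f (Ici a)) (hx : a < x) :
    HasDerivAt (fun s => ∫ r in a..s, f r) (f x) x :=
  intervalIntegral.integral_hasDerivAt_right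
    ((hf.mono (by simp [uIcc_of_le hx.le, Icc_subset_Ici_self])).intervalIntegrable)
    ((hf.mono Ioi_subset_Ici_self).stronglyMeasurableAtFilter isOpen_Ioi x hx)
    (hf.continuousAt (Ici_mem_nhds hx))

theorem hasDerivAt_toReal_setLIntegral_Ioi {f : ℝ → ℝ} {a x : ℝ} (hf : ContinuousOn f (Ici a))
    (hf0 : ∀ r ∈ Ici a, 0 ≤ f r) (hfin : ∫⁻ r in Ioi a, ENNReal.ofReal (f r) ≠ ∞)
    (hx : a < x) :
    HasDerivAt (fun s => (∫⁻ r in Ioi s, ENNReal.ofReal (f r)).toReal) (-f x) x := by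
  have hsplit : ∀ s ≥ a, (∫⁻ r in Ioi s, ENNReal.ofReal (f r)).toReal =
      (∫⁻ r in Ioi a, ENNReal.ofReal (f r)).toReal - ∫ r in a..s, f r := by
    intro s hs
    have htail : ∫⁻ r in Ioi s, ENNReal.ofReal (f r) ≠ ∞ :=
      ne_top_of_le_ne_top hfin (lintegral_mono_set (Ioi_subset_Ioi hs))
    rw [← Ioc_union_Ioi_eq_Ioi hs, lintegral_union measurableSet_Ioi Ioc_disjoint_Ioi_same,
      ← ofReal_intervalIntegral_eq_setLIntegral_Ioc hs (hf.mono Icc_subset_Ici_self)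
        (fun r hr => hf0 r hr.1.le),
      ENNReal.toReal_add ENNReal.ofReal_ne_top htail,
      ENNReal.toReal_ofReal (intervalIntegral.integral_nonneg hs fun r hr => hf0 r hr.1)]
    ring
  refine ((hasDerivAt_intervalIntegral_of_continuousOn_Ici hf hx).const_sub
    (∫⁻ r in Ioi a, ENNReal.ofReal (f r)).toReal).congr_of_eventuallyEq ?_
  filter_upwards [Ioi_mem_nhds hx] with s hs using hsplit s (le_of_lt hs)

theorem tendsto_atTop_of_hasDerivAt_of_le {f f' : ℝ → ℝ} {a k : ℝ} (hk : 0 < k)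
    (hf : ∀ x > a, HasDerivAt f (f' x) x) (hf' : ∀ x > a, k ≤ f' x) :
    Tendsto f atTop atTop := by
  have hgrowth : ∀ x ∈ Ioi a, ∀ y ∈ Ioi a, x ≤ y → k * (y - x) ≤ f y - f x := by
    refine (convex_Ioi a).mul_sub_le_image_sub_of_le_deriv
      (fun x hx => (hf x hx).continuousAt.continuousWithinAt)
      (fun x hx => (hf x (interior_subset hx)).differentiableAt.differentiableWithinAt)
      (fun x hx => ?_)
    rw [(hf x (interior_subset hx)).deriv]
    exact hf' x (interior_subset hx)
  have hlin : Tendsto (fun y => f (a + 1) + k * (y - (a + 1))) atTop atTop :=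
    tendsto_atTop_add_const_left _ _ <|
      (tendsto_atTop_add_const_right _ _ tendsto_id).const_mul_atTop hk
  refine tendsto_atTop_mono' atTop ?_ hlin
  filter_upwards [eventually_ge_atTop (a + 1)] with y hy
  linarith [hgrowth (a + 1) (mem_Ioi.2 (by linarith)) y (mem_Ioi.2 (by linarith)) hy]

theorem half_le_mul_sub_div {w i v c : ℝ} (hc : 0 < c) (hw : 0 < w) (hv : 0 ≤ v)
    (hlow : c ≤ w * i) (hup : v * i ≤ c ^ 2 / 2) : c / 2 ≤ w * i - v / w := by
  have hv_le : v ≤ c / 2 * w := by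
    nlinarith [mul_le_mul_of_nonneg_left hlow hv]
  have : v / w ≤ c / 2 := (div_le_iff₀ hw).2 hv_le
  linarith

theorem hasDerivAt_intervalIntegral_mul_toReal_setLIntegral_Ioi {ω : ℝ → ℝ}
    (hωc : ContinuousOn ω (Ici 0)) (hωpos : ∀ r ∈ Ici (0:ℝ), 0 < ω r) {a x : ℝ} (ha : 0 ≤ a)
    (hfin : ∫⁻ r in Ioi a, ENNReal.ofReal (ω r)⁻¹ ≠ ∞) (hx : a < x) :
    HasDerivAt (fun s => (∫ r in 0..s, ω r) * (∫⁻ r in Ioi s, ENNReal.ofReal (ω r)⁻¹).toReal)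
      (ω x * (∫⁻ r in Ioi x, ENNReal.ofReal (ω r)⁻¹).toReal - (∫ r in 0..x, ω r) / ω x) x := by
  have hi := hasDerivAt_toReal_setLIntegral_Ioi (f := fun r => (ω r)⁻¹)
    (hωc.inv₀ (fun r hr => (hωpos r hr).ne') |>.mono (Ici_subset_Ici.2 ha))
    (fun r hr => (inv_pos.2 (hωpos r (ha.trans hr))).le) hfin hx
  refine ((hasDerivAt_intervalIntegral_of_continuousOn_Ici hωc (ha.trans_lt hx)).mul
    hi).congr_deriv ?_
  ring

theorem frequently_mul_toReal_setLIntegral_Ioi_inv_lt {ω : ℝ → ℝ}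
    (hωc : ContinuousOn ω (Ici 0)) (hωpos : ∀ r ∈ Ici (0:ℝ), 0 < ω r) {a : ℝ} (ha : 0 < a)
    (hfin : ∫⁻ r in Ioi a, ENNReal.ofReal (ω r)⁻¹ ≠ ∞)
    (hzero : Tendsto (fun s => (∫ r in 0..s, ω r) *
      (∫⁻ r in Ioi s, ENNReal.ofReal (ω r)⁻¹).toReal) atTop (𝓝 0))
    {c : ℝ} (hc : 0 < c) :
    ∃ᶠ s in atTop, ω s * (∫⁻ r in Ioi s, ENNReal.ofReal (ω r)⁻¹).toReal < c := by
  by_contra! hbig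
  obtain ⟨b, hb⟩ := eventually_atTop.1 <| hbig.and <|
    (hzero.eventually (eventually_le_nhds (by positivity : 0 < c ^ 2 / 2))).and
      (eventually_ge_atTop a)
  have htop := tendsto_atTop_of_hasDerivAt_of_le (a := b) (half_pos hc)
    (fun x hx => hasDerivAt_intervalIntegral_mul_toReal_setLIntegral_Ioi hωc hωpos ha.le hfin
      ((hb b le_rfl).2.2.trans_lt hx))
    fun x hx => half_le_mul_sub_div hc (hωpos x (ha.le.trans (hb x hx.le).2.2))
      (intervalIntegral.integral_nonneg (ha.le.trans (hb x hx.le).2.2)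
        fun r hr => (hωpos r hr.1).le) (hb x hx.le).1 (hb x hx.le).2.1
  exact not_tendsto_nhds_of_tendsto_atTop htop 0 hzero

theorem frequently_mul_lintegral_Ioi_inv_lt {ω : ℝ → ℝ} (hωc : ContinuousOn ω (Ici 0))
    (hωpos : ∀ r ∈ Ici (0:ℝ), 0 < ω r)
    (h1 : Tendsto (fun s : ℝ => (∫⁻ r in Ioi s, ENNReal.ofReal (ω r)⁻¹) *
        ∫⁻ r in Ioc 0 s, ENNReal.ofReal (ω r)) atTop (𝓝 0))
    {c : ℝ} (hc : 0 < c) :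
    ∃ᶠ s in atTop, ENNReal.ofReal (ω s) * ∫⁻ r in Ioi s, ENNReal.ofReal (ω r)⁻¹ <
      ENNReal.ofReal c := by
  have hV : ∀ s ≥ 0, ∫⁻ r in Ioc 0 s, ENNReal.ofReal (ω r) = ENNReal.ofReal (∫ r in 0..s, ω r) :=
    fun s hs => (ofReal_intervalIntegral_eq_setLIntegral_Ioc hs (hωc.mono Icc_subset_Ici_self)
      fun r hr => (hωpos r hr.1.le).le).symm
  obtain ⟨a, ha⟩ := eventually_atTop.1 <|
    (h1.eventually (eventually_lt_nhds zero_lt_one)).and (eventually_gt_atTop 0)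
  have ha_pos : 0 < a := (ha a le_rfl).2
  -- finite because its product with the positive mass `∫₀ᵃ ω` is
  have hfin : ∫⁻ r in Ioi a, ENNReal.ofReal (ω r)⁻¹ ≠ ∞ := by
    intro htop
    have h := (ha a le_rfl).1
    rw [hV a ha_pos.le, htop, ENNReal.top_mul (ENNReal.ofReal_pos.2 <|
      intervalIntegral.intervalIntegral_pos_of_pos_on
        ((hωc.mono Icc_subset_Ici_self).intervalIntegrable_of_Icc ha_pos.le)
        (fun r hr => hωpos r hr.1.le) ha_pos).ne'] at h
    exact not_top_lt h
  have htail : ∀ s ≥ a, ∫⁻ r in Ioi s, ENNReal.ofReal (ω r)⁻¹ =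
      ENNReal.ofReal (∫⁻ r in Ioi s, ENNReal.ofReal (ω r)⁻¹).toReal := fun s hs =>
    (ENNReal.ofReal_toReal (ne_top_of_le_ne_top hfin (lintegral_mono_set (Ioi_subset_Ioi hs)))).symm
  have hzero := (ENNReal.tendsto_toReal ENNReal.zero_ne_top).comp h1
  rw [ENNReal.toReal_zero] at hzero
  refine (frequently_mul_toReal_setLIntegral_Ioi_inv_lt hωc hωpos ha_pos hfin
    (hzero.congr' ?_) hc).and_eventually (eventually_ge_atTop a) |>.mono ?_
  · filter_upwards [eventually_ge_atTop a] with s hs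
    rw [Function.comp_apply, hV s (ha_pos.le.trans hs), ENNReal.toReal_mul,
      ENNReal.toReal_ofReal (intervalIntegral.integral_nonneg (ha_pos.le.trans hs)
        fun r hr => (hωpos r hr.1).le), mul_comm]
  · rintro s ⟨hlt, hs⟩
    rw [htail s hs, ← ENNReal.ofReal_mul (hωpos s (ha_pos.le.trans hs)).le]
    exact ENNReal.ofReal_lt_ofReal_iff hc |>.2 hlt

theorem stmt4_general (ω : ℝ → ℝ)
    (hωc : ContinuousOn ω (Ici 0)) (hωpos : ∀ r ∈ Ici (0:ℝ), 0 < ω r)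
    (L : ℝ≥0∞)
    (hL : Tendsto (fun s : ℝ => ENNReal.ofReal ((ω s)^2) *
        (∫⁻ r in Ioi s, ENNReal.ofReal (ω r)⁻¹)^2) atTop (nhds L))
    (h1 : Tendsto (fun s : ℝ => (∫⁻ r in Ioi s, ENNReal.ofReal (ω r)⁻¹) *
        ∫⁻ r in Ioc 0 s, ENNReal.ofReal (ω r)) atTop (nhds 0)) :
    Tendsto (fun s : ℝ => ENNReal.ofReal (ω s)⁻¹ /
        ∫⁻ r in Ioi s, ENNReal.ofReal (ω r)⁻¹) atTop (nhds ⊤) := by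
  set F : ℝ → ℝ≥0∞ := fun s => ENNReal.ofReal (ω s) * ∫⁻ r in Ioi s, ENNReal.ofReal (ω r)⁻¹
  have hF : Tendsto F atTop (𝓝 (L ^ (2⁻¹ : ℝ))) := by
    refine ((ENNReal.continuous_rpow_const.tendsto L).comp hL).congr' ?_
    filter_upwards [eventually_ge_atTop 0] with s hs
    rw [Function.comp_apply, ENNReal.ofReal_pow (hωpos s hs).le, ← mul_pow]
    exact_mod_cast ENNReal.pow_rpow_inv_natCast two_ne_zero (F s)
  have hF0 : L ^ (2⁻¹ : ℝ) = 0 :=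
    nonpos_iff_eq_zero.1 <| ENNReal.le_of_forall_pos_le_add fun ε hε _ => by
      simpa using le_of_tendsto_of_frequently hF <|
        (frequently_mul_lintegral_Ioi_inv_lt hωc hωpos h1 (NNReal.coe_pos.2 hε)).mono
          fun s hs => hs.le
  rw [hF0] at hF
  refine (ENNReal.inv_zero ▸ tendsto_inv_iff.2 hF).congr' ?_
  filter_upwards [eventually_ge_atTop 0] with s hs
  have hωs := hωpos s hs
  rw [ENNReal.mul_inv (Or.inl (ENNReal.ofReal_pos.2 hωs).ne') (Or.inl ENNReal.ofReal_ne_top),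
    ENNReal.ofReal_inv_of_pos hωs, div_eq_mul_inv]

/-- L'Hopital simplification, infinite-volume case: if the limit
L = lim_s ω̄(s)²(∫_s^∞ ω̄⁻¹)² exists in [0,∞], lim_s (∫_s^∞ ω̄⁻¹)(∫_0^s ω̄) = 0 and
∫_0^∞ ω̄ = ∞, then ω̄(s)⁻¹ / ∫_s^∞ ω̄⁻¹ → ∞. -/
theorem stmt4 (ω : ℝ → ℝ)
    (hωc : ContinuousOn ω (Ici 0)) (hωpos : ∀ r ∈ Ici (0:ℝ), 0 < ω r)
    (L : ℝ≥0∞)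
    (hL : Tendsto (fun s : ℝ => ENNReal.ofReal ((ω s)^2) *
        (∫⁻ r in Ioi s, ENNReal.ofReal (ω r)⁻¹)^2) atTop (nhds L))
    (h1 : Tendsto (fun s : ℝ => (∫⁻ r in Ioi s, ENNReal.ofReal (ω r)⁻¹) *
        ∫⁻ r in Ioc 0 s, ENNReal.ofReal (ω r)) atTop (nhds 0))
    (h2 : ∫⁻ r in Ioi 0, ENNReal.ofReal (ω r) = ⊤) :
    Tendsto (fun s : ℝ => ENNReal.ofReal (ω s)⁻¹ /
        ∫⁻ r in Ioi s, ENNReal.ofReal (ω r)⁻¹) atTop (nhds ⊤) :=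
  stmt4_general ω hωc hωpos L hL h1
end

section
/- Let ω̄ : [0,∞) → (0,∞) be continuous with z(r) = ∫_0^r ω̄(s)⁻¹ ds satisfying z(r) → ∞ as r → ∞. Define r̂(r) by z(r̂) = 2z(r). If there exist R and ε > 0 such that z(r)·∫_r^{r̂} ω̄ ds < ε for all r > R, then for all r > R, ∫_0^r ω̄(s)⁻¹ ds · ∫_r^∞ ω̄(s) ds ≤ 2ε. -/
open MeasureTheory Set Filter
open scoped ENNReal

/-!
Iterating `r ↦ r̂` from `r` gives an increasing sequence `gₙ` with `z(gₙ) = 2ⁿ z(r)`, which is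
unbounded because `z` is monotone. The pieces `(gₙ, gₙ₊₁]` tile `(r, ∞)`, and on the `n`-th piece
`z(r) ∫ ω̄ = 2⁻ⁿ z(gₙ) ∫ ω̄ < 2⁻ⁿ ε`; summing the geometric series gives `2ε`.
-/

lemma integrableOn_Ioc_of_continuousOn_Ici {f : ℝ → ℝ} {a c : ℝ} (hf : ContinuousOn f (Ici a))
    (hac : a ≤ c) (b : ℝ) : IntegrableOn f (Ioc c b) :=
  ((hf.mono fun _ hx => hac.trans hx.1).integrableOn_Icc).mono_set Ioc_subset_Icc_self

lemma lintegral_Ioc_ofReal_of_continuousOn_Ici {f : ℝ → ℝ} {a c : ℝ}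
    (hf : ContinuousOn f (Ici a)) (hnn : ∀ x ∈ Ici a, 0 ≤ f x) (hac : a ≤ c) (b : ℝ) :
    ∫⁻ x in Ioc c b, ENNReal.ofReal (f x) = ENNReal.ofReal (∫ x in Ioc c b, f x) :=
  (ofReal_integral_eq_lintegral_ofReal (integrableOn_Ioc_of_continuousOn_Ici hf hac b)
    ((ae_restrict_iff' measurableSet_Ioc).2 <| Eventually.of_forall fun x hx =>
      hnn x (hac.trans hx.1.le))).symm

lemma monotone_setIntegral_Ioc {f : ℝ → ℝ} {a : ℝ} (hf : ContinuousOn f (Ici a))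
    (hnn : ∀ x ∈ Ioi a, 0 ≤ f x) : Monotone fun t => ∫ s in Ioc a t, f s := by
  intro s t hst
  refine setIntegral_mono_set (integrableOn_Ioc_of_continuousOn_Ici hf le_rfl t) ?_
    (Ioc_subset_Ioc_right hst).eventuallyLE
  exact (ae_restrict_iff' measurableSet_Ioc).2 <| Eventually.of_forall fun x hx => hnn x hx.1

lemma setIntegral_Ioc_pos {f : ℝ → ℝ} {a b : ℝ} (hab : a < b) (hf : ContinuousOn f (Ici a))
    (hpos : ∀ x ∈ Ioi a, 0 < f x) : 0 < ∫ s in Ioc a b, f s := by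
  rw [← intervalIntegral.integral_of_le hab.le]
  refine intervalIntegral.intervalIntegral_pos_of_pos_on ?_ (fun x hx => hpos x hx.1) hab
  exact (intervalIntegrable_iff_integrableOn_Ioc_of_le hab.le).2
    (integrableOn_Ioc_of_continuousOn_Ici hf le_rfl b)

lemma lintegral_Ioi_eq_tsum_Ioc {α : Type*} [LinearOrder α] [TopologicalSpace α]
    [OrderClosedTopology α] [MeasurableSpace α] [OpensMeasurableSpace α] {μ : Measure α}
    {f : α → ℝ≥0∞} {g : ℕ → α} (hg : Monotone g) (hunb : ¬BddAbove (range g)) :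
    ∫⁻ x in Ioi (g 0), f x ∂μ = ∑' n, ∫⁻ x in Ioc (g n) (g (n + 1)), f x ∂μ := by
  have hcover : ⋃ n, Ioc (g n) (g (n + 1)) = Ioi (g 0) :=
    iUnion_Ioc_map_succ_eq_Ioi (fun n => hg (Nat.zero_le n)) hunb
  rw [← hcover]
  exact lintegral_iUnion (fun _ => measurableSet_Ioc) hg.pairwise_disjoint_on_Ioc_succ _

lemma ENNReal.tsum_le_two_mul_of_two_pow_mul_le {a : ℕ → ℝ≥0∞} {c : ℝ≥0∞}
    (h : ∀ n, 2 ^ n * a n ≤ c) : ∑' n, a n ≤ 2 * c := by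
  have hterm : ∀ n, a n ≤ c * 2⁻¹ ^ n := fun n => by
    rw [← ENNReal.inv_pow, ← div_eq_mul_inv, ENNReal.le_div_iff_mul_le (by simp) (by simp),
      mul_comm]
    exact h n
  calc ∑' n, a n ≤ ∑' n, c * 2⁻¹ ^ n := ENNReal.tsum_le_tsum hterm
    _ = 2 * c := by rw [ENNReal.tsum_mul_left, ENNReal.tsum_geometric_two, mul_comm]

section Doubling

variable {z rhat : ℝ → ℝ} {R r : ℝ} (hz : Monotone z) (hpos : ∀ t > R, 0 < z t)
  (hdouble : ∀ t > R, z (rhat t) = 2 * z t)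
include hz hpos hdouble

lemma lt_rhat_of_doubling {t : ℝ} (ht : R < t) : t < rhat t :=
  hz.reflect_lt <| by rw [hdouble t ht]; linarith [hpos t ht]

lemma iterate_doubling (hr : R < r) (n : ℕ) :
    R < rhat^[n] r ∧ z (rhat^[n] r) = 2 ^ n * z r := by
  induction n with
  | zero => simpa using hr
  | succ n ih =>
    rw [Function.iterate_succ_apply', hdouble _ ih.1, ih.2, pow_succ]
    exact ⟨ih.1.trans (lt_rhat_of_doubling hz hpos hdouble ih.1), by ring⟩

lemma strictMono_iterate_doubling (hr : R < r) : StrictMono fun n => rhat^[n] r :=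
  strictMono_nat_of_lt_succ fun n => by
    rw [Function.iterate_succ_apply']
    exact lt_rhat_of_doubling hz hpos hdouble (iterate_doubling hz hpos hdouble hr n).1

lemma not_bddAbove_range_iterate_doubling (hr : R < r) :
    ¬BddAbove (range fun n => rhat^[n] r) := by
  rintro ⟨M, hM⟩
  obtain ⟨n, hn⟩ := pow_unbounded_of_one_lt (z M / z r) one_lt_two
  have hzM : z (rhat^[n] r) ≤ z M := hz (hM ⟨n, rfl⟩)
  rw [(iterate_doubling hz hpos hdouble hr n).2] at hzM
  rw [div_lt_iff₀ (hpos r hr)] at hn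
  linarith

end Doubling

theorem stmt6_general (ω : ℝ → ℝ)
    (hωc : ContinuousOn ω (Ici 0)) (hωpos : ∀ r ∈ Ici (0:ℝ), 0 < ω r)
    (rhat : ℝ → ℝ)
    (hrhat : ∀ r ≥ (0:ℝ), (∫ s in Ioc 0 (rhat r), (ω s)⁻¹) = 2 * ∫ s in Ioc 0 r, (ω s)⁻¹)
    (R ε : ℝ) (hR : 0 ≤ R)
    (hsmall : ∀ r > R, (∫ s in Ioc 0 r, (ω s)⁻¹) * ∫ s in Ioc r (rhat r), ω s < ε) :
    ∀ r > R, ENNReal.ofReal (∫ s in Ioc 0 r, (ω s)⁻¹) *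
        ∫⁻ s in Ioi r, ENNReal.ofReal (ω s) ≤ ENNReal.ofReal (2 * ε) := by
  intro r hr
  set z : ℝ → ℝ := fun t => ∫ s in Ioc 0 t, (ω s)⁻¹
  have hωinv : ContinuousOn (fun s => (ω s)⁻¹) (Ici 0) := hωc.inv₀ fun x hx => (hωpos x hx).ne'
  have hωinv_pos : ∀ x ∈ Ioi (0:ℝ), 0 < (ω x)⁻¹ := fun x hx =>
    inv_pos.2 (hωpos x (Ioi_subset_Ici_self hx))
  have hz : Monotone z := monotone_setIntegral_Ioc hωinv fun x hx => (hωinv_pos x hx).le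
  have hpos : ∀ t > R, 0 < z t := fun t ht => setIntegral_Ioc_pos (hR.trans_lt ht) hωinv hωinv_pos
  have hdouble : ∀ t > R, z (rhat t) = 2 * z t := fun t ht => hrhat t (hR.trans ht.le)
  set g : ℕ → ℝ := fun n => rhat^[n] r
  have hg := iterate_doubling hz hpos hdouble hr
  rw [show r = g 0 from rfl, lintegral_Ioi_eq_tsum_Ioc
      (strictMono_iterate_doubling hz hpos hdouble hr).monotone
      (not_bddAbove_range_iterate_doubling hz hpos hdouble hr),
    ← ENNReal.tsum_mul_left, ENNReal.ofReal_mul zero_le_two, ENNReal.ofReal_ofNat]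
  refine ENNReal.tsum_le_two_mul_of_two_pow_mul_le fun n => ?_
  have hsmall_n := hsmall (g n) (hg n).1
  rw [← Function.iterate_succ_apply' rhat n r] at hsmall_n
  calc 2 ^ n * (ENNReal.ofReal (z r) * ∫⁻ s in Ioc (g n) (g (n + 1)), ENNReal.ofReal (ω s))
      = ENNReal.ofReal (z (g n) * ∫ s in Ioc (g n) (g (n + 1)), ω s) := by
        rw [lintegral_Ioc_ofReal_of_continuousOn_Ici hωc (fun x hx => (hωpos x hx).le)
            (hR.trans (hg n).1.le), (hg n).2,
          ENNReal.ofReal_mul (mul_pos (pow_pos two_pos n) (hpos r hr)).le,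
          ENNReal.ofReal_mul (pow_pos two_pos n).le, ENNReal.ofReal_pow zero_le_two,
          ENNReal.ofReal_ofNat, mul_assoc]
    _ ≤ ENNReal.ofReal ε := ENNReal.ofReal_le_ofReal hsmall_n.le

/-- Key dyadic estimate: if z(r)∫_r^{r̂} ω̄ < ε for all r > R then
∫_0^r ω̄⁻¹ · ∫_r^∞ ω̄ ≤ 2ε for all r > R. -/
theorem stmt6 (ω : ℝ → ℝ)
    (hωc : ContinuousOn ω (Ici 0)) (hωpos : ∀ r ∈ Ici (0:ℝ), 0 < ω r)
    (hz : Tendsto (fun r : ℝ => ∫ s in Ioc 0 r, (ω s)⁻¹) atTop atTop)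
    (rhat : ℝ → ℝ)
    (hrhat : ∀ r ≥ (0:ℝ), (∫ s in Ioc 0 (rhat r), (ω s)⁻¹) = 2 * ∫ s in Ioc 0 r, (ω s)⁻¹)
    (R ε : ℝ) (hR : 0 ≤ R) (hε : 0 < ε)
    (hsmall : ∀ r > R, (∫ s in Ioc 0 r, (ω s)⁻¹) * ∫ s in Ioc r (rhat r), ω s < ε) :
    ∀ r > R, ENNReal.ofReal (∫ s in Ioc 0 r, (ω s)⁻¹) *
        ∫⁻ s in Ioi r, ENNReal.ofReal (ω s) ≤ ENNReal.ofReal (2 * ε) :=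
  stmt6_general ω hωc hωpos rhat hrhat R ε hR hsmall
end

section
/- Let ω̄_c : [0,∞) → (0,∞) be continuous, and suppose there exist c₁ > 0 and a strictly increasing sequence (t_n) with t_0 ≥ 0 and t_n → ∞ such that for all n, ∫_{t_{n+1}}^∞ ω̄_c(r)⁻¹ dr · ∫_{t_n}^{t_{n+1}} ω̄_c(s) ds > c₁. Then ∫_0^∞ ω̄_c(r)⁻¹ ( ∫_0^r ω̄_c(s) ds ) dr = ∞. -/
open MeasureTheory Set Filter
open scoped ENNReal

/-!
Since the intervals `(t_k, t_{k+1}]` are disjoint, `∫_0^r ω ≥ Σ_{k : t_{k+1} < r} ∫_{t_k}^{t_{k+1}} ω`.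
Multiplying by `ω(r)⁻¹`, integrating over `r > 0` and exchanging sum and integral (Tonelli)
bounds the double integral from below by `Σₖ ∫_{t_{k+1}}^∞ ω⁻¹ · ∫_{t_k}^{t_{k+1}} ω`,
a series whose terms all exceed `c₁ > 0`.
-/

lemma ofReal_setIntegral_Ioc_eq_lintegral {ω : ℝ → ℝ} {b c : ℝ}
    (hω : ContinuousOn ω (Icc b c)) (hnn : ∀ x ∈ Ioc b c, 0 ≤ ω x) :
    ENNReal.ofReal (∫ x in Ioc b c, ω x) = ∫⁻ x in Ioc b c, ENNReal.ofReal (ω x) :=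
  ofReal_integral_eq_lintegral_ofReal (hω.integrableOn_Icc.mono_set Ioc_subset_Icc_self)
    (ae_restrict_of_forall_mem measurableSet_Ioc hnn)

section Tonelli

variable {μ : Measure ℝ} {t : ℕ → ℝ} {a : ℝ}

lemma tsum_indicator_setLIntegral_Ioc_le (ht : Monotone t) (ha : a ≤ t 0)
    (g : ℝ → ℝ≥0∞) (r : ℝ) :
    ∑' k, (Ioi (t (k + 1))).indicator (fun _ => ∫⁻ x in Ioc (t k) (t (k + 1)), g x ∂μ) r
      ≤ ∫⁻ x in Ioc a r, g x ∂μ := by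
  set D : ℕ → Set ℝ := fun k => Ioc (t k) (t (k + 1)) ∩ Ioc a r
  have hD : Pairwise fun i j => Disjoint (D i) (D j) := fun i j hij =>
    (ht.pairwise_disjoint_on_Ioc_succ hij).mono inter_subset_left inter_subset_left
  calc ∑' k, (Ioi (t (k + 1))).indicator (fun _ => ∫⁻ x in Ioc (t k) (t (k + 1)), g x ∂μ) r
      ≤ ∑' k, ∫⁻ x in D k, g x ∂μ := by
        refine ENNReal.tsum_le_tsum fun k => ?_
        by_cases hr : t (k + 1) < r
        · have hsub : Ioc (t k) (t (k + 1)) ⊆ Ioc a r :=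
            Ioc_subset_Ioc (ha.trans (ht k.zero_le)) hr.le
          simp [hr, D, inter_eq_left.2 hsub]
        · simp [hr]
    _ = ∫⁻ x in ⋃ k, D k, g x ∂μ :=
        (lintegral_iUnion (fun _ => measurableSet_Ioc.inter measurableSet_Ioc) hD g).symm
    _ ≤ ∫⁻ x in Ioc a r, g x ∂μ := lintegral_mono_set (iUnion_subset fun _ => inter_subset_right)

lemma tsum_setLIntegral_Ioi_mul_le_lintegral (ht : Monotone t) (ha : a ≤ t 0)
    (g h : ℝ → ℝ≥0∞) (hh : AEMeasurable h (μ.restrict (Ioi a))) :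
    ∑' k, (∫⁻ r in Ioi (t (k + 1)), h r ∂μ) * ∫⁻ x in Ioc (t k) (t (k + 1)), g x ∂μ
      ≤ ∫⁻ r in Ioi a, h r * ∫⁻ x in Ioc a r, g x ∂μ ∂μ := by
  set A : ℕ → ℝ≥0∞ := fun k => ∫⁻ x in Ioc (t k) (t (k + 1)), g x ∂μ
  set F : ℕ → ℝ → ℝ≥0∞ := fun k => (Ioi (t (k + 1))).indicator fun r => A k * h r
  have hterm : ∀ k, (∫⁻ r in Ioi (t (k + 1)), h r ∂μ) * A k ≤ ∫⁻ r in Ioi a, F k r ∂μ := by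
    intro k
    have hsub : Ioi (t (k + 1)) ⊆ Ioi a := Ioi_subset_Ioi (ha.trans (ht (Nat.zero_le _)))
    rw [mul_comm, lintegral_indicator measurableSet_Ioi, Measure.restrict_restrict measurableSet_Ioi,
      inter_eq_left.2 hsub]
    exact lintegral_const_mul_le _ _
  have hpointwise : ∀ r, ∑' k, F k r ≤ h r * ∫⁻ x in Ioc a r, g x ∂μ := fun r =>
    calc ∑' k, F k r = h r * ∑' k, (Ioi (t (k + 1))).indicator (fun _ => A k) r := by
          simp only [F, indicator_mul_left, ENNReal.tsum_mul_right]
          exact mul_comm _ _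
      _ ≤ h r * ∫⁻ x in Ioc a r, g x ∂μ :=
          mul_le_mul_right (tsum_indicator_setLIntegral_Ioc_le ht ha g r) _
  calc ∑' k, (∫⁻ r in Ioi (t (k + 1)), h r ∂μ) * A k
      ≤ ∑' k, ∫⁻ r in Ioi a, F k r ∂μ := ENNReal.tsum_le_tsum hterm
    _ = ∫⁻ r in Ioi a, ∑' k, F k r ∂μ :=
        (lintegral_tsum fun k => (hh.const_mul _).indicator measurableSet_Ioi).symm
    _ ≤ ∫⁻ r in Ioi a, h r * ∫⁻ x in Ioc a r, g x ∂μ ∂μ := lintegral_mono hpointwise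

end Tonelli

theorem stmt7_general (ω : ℝ → ℝ)
    (hωc : ContinuousOn ω (Ici 0)) (hωpos : ∀ r ∈ Ici (0:ℝ), 0 < ω r)
    (c₁ : ℝ) (hc₁ : 0 < c₁) (t : ℕ → ℝ) (hmono : StrictMono t) (ht0 : 0 ≤ t 0)
    (hterm : ∀ n : ℕ, ENNReal.ofReal c₁ <
      (∫⁻ r in Ioi (t (n+1)), ENNReal.ofReal (ω r)⁻¹) *
        ENNReal.ofReal (∫ s in Ioc (t n) (t (n+1)), ω s)) :
    ∫⁻ r in Ioi 0, ENNReal.ofReal ((ω r)⁻¹ * ∫ s in Ioc 0 r, ω s) = ⊤ := by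
  have hlift : ∀ {b c : ℝ}, 0 ≤ b →
      ENNReal.ofReal (∫ s in Ioc b c, ω s) = ∫⁻ s in Ioc b c, ENNReal.ofReal (ω s) :=
    fun hb => ofReal_setIntegral_Ioc_eq_lintegral (hωc.mono fun _ hx => hb.trans hx.1)
      fun _ hx => (hωpos _ (hb.trans hx.1.le)).le
  have htnn : ∀ n, 0 ≤ t n := fun n => ht0.trans (hmono.monotone n.zero_le)
  have hmeas : AEMeasurable (fun r => ENNReal.ofReal (ω r)⁻¹) (volume.restrict (Ioi 0)) :=
    ((hωc.aemeasurable measurableSet_Ici).mono_measure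
      (Measure.restrict_mono Ioi_subset_Ici_self le_rfl)).inv.ennreal_ofReal
  refine top_unique ?_
  calc ⊤ = ∑' _ : ℕ, ENNReal.ofReal c₁ :=
        (ENNReal.tsum_const_eq_top_of_ne_zero (ENNReal.ofReal_pos.2 hc₁).ne').symm
    _ ≤ ∑' n, (∫⁻ r in Ioi (t (n + 1)), ENNReal.ofReal (ω r)⁻¹) *
          ∫⁻ s in Ioc (t n) (t (n + 1)), ENNReal.ofReal (ω s) :=
        ENNReal.tsum_le_tsum fun n => (hterm n).le.trans_eq (by rw [hlift (htnn n)])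
    _ ≤ ∫⁻ r in Ioi 0, ENNReal.ofReal (ω r)⁻¹ * ∫⁻ s in Ioc 0 r, ENNReal.ofReal (ω s) :=
        tsum_setLIntegral_Ioi_mul_le_lintegral hmono.monotone ht0 _ _ hmeas
    _ = ∫⁻ r in Ioi 0, ENNReal.ofReal ((ω r)⁻¹ * ∫ s in Ioc 0 r, ω s) :=
        setLIntegral_congr_fun measurableSet_Ioi fun r hr => by
          rw [ENNReal.ofReal_mul (inv_nonneg.2 (hωpos r (mem_Ici.2 (le_of_lt hr))).le),
            hlift le_rfl]

/-- Divergence criterion: if along a strictly increasing sequence t_n → ∞ each term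
∫_{t_{n+1}}^∞ ω̄_c⁻¹ · ∫_{t_n}^{t_{n+1}} ω̄_c exceeds c₁ > 0, then
∫_0^∞ ω̄_c(r)⁻¹ (∫_0^r ω̄_c) dr = ∞. -/
theorem stmt7 (ω : ℝ → ℝ)
    (hωc : ContinuousOn ω (Ici 0)) (hωpos : ∀ r ∈ Ici (0:ℝ), 0 < ω r)
    (c₁ : ℝ) (hc₁ : 0 < c₁) (t : ℕ → ℝ) (hmono : StrictMono t) (ht0 : 0 ≤ t 0)
    (htop : Tendsto t atTop atTop)
    (hterm : ∀ n : ℕ, ENNReal.ofReal c₁ <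
      (∫⁻ r in Ioi (t (n+1)), ENNReal.ofReal (ω r)⁻¹) *
        ENNReal.ofReal (∫ s in Ioc (t n) (t (n+1)), ω s)) :
    ∫⁻ r in Ioi 0, ENNReal.ofReal ((ω r)⁻¹ * ∫ s in Ioc 0 r, ω s) = ⊤ :=
  stmt7_general ω hωc hωpos c₁ hc₁ t hmono ht0 hterm
end

section
/- Let ω̄_c : [0,∞) → (0,∞) be C¹ and let u : [0,∞) → ℝ solve -u'' - (ω̄_c'/ω̄_c) u' + u = 0 with u(0) = 1, u'(0) = 0. Then for all r > 0, u(r) > 0 and u'(r) > 0. -/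
/-!
Multiplying the equation by `u ω` shows that `f = u u' ω` satisfies `f' = ω (u² + u'²) ≥ 0`, with
`f 0 = 0` and `f' 0 = ω 0 > 0`. Hence `f > 0` on `(0, ∞)`, so `u` never vanishes there and stays
positive by continuity; then `u' > 0` because `u u' ω > 0`.
-/

open Set Topology

lemma IsPreconnected.pos_of_ne_zero {X α : Type*} [TopologicalSpace X] [LinearOrder α]
    [TopologicalSpace α] [OrderClosedTopology α] [Zero α] {s : Set X} {f : X → α}
    (hs : IsPreconnected s) (hf : ContinuousOn f s) (hne : ∀ x ∈ s, f x ≠ 0) {a : X}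
    (ha : a ∈ s) (hfa : 0 < f a) {x : X} (hx : x ∈ s) : 0 < f x := by
  by_contra hfx
  obtain ⟨y, hy, hfy⟩ := hs.intermediate_value hx ha hf ⟨not_lt.1 hfx, hfa.le⟩
  exact hne y hy hfy

lemma MonotoneOn.pos_of_deriv_pos {f : ℝ → ℝ} {a r : ℝ} (hmono : MonotoneOn f (Ici a))
    (hfa : f a = 0) (hf' : 0 < deriv f a) (hr : a < r) : 0 < f r := by
  have hsign : ∀ᶠ x in 𝓝[>] a, 0 < f x := by
    filter_upwards [nhdsWithin_le_nhds (eventually_nhdsWithin_sign_eq_of_deriv_pos hf' hfa),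
      self_mem_nhdsWithin] with x hx hxa
    rwa [sign_pos (sub_pos.2 hxa), sign_eq_one_iff] at hx
  obtain ⟨x, hfx, hxr⟩ := (hsign.and (Ioo_mem_nhdsGT hr)).exists
  exact hfx.trans_le (hmono (mem_Ici.2 hxr.1.le) (mem_Ici.2 hr.le) hxr.2.le)

lemma hasDerivAt_mul_deriv_mul_of_ode {u ω : ℝ → ℝ} {r : ℝ} (hu : DifferentiableAt ℝ u r)
    (hu' : DifferentiableAt ℝ (deriv u) r) (hω : DifferentiableAt ℝ ω r) (hωr : ω r ≠ 0)
    (hode : -(deriv (deriv u) r) - (deriv ω r / ω r) * deriv u r + u r = 0) :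
    HasDerivAt (fun s => u s * deriv u s * ω s) (ω r * (u r ^ 2 + deriv u r ^ 2)) r := by
  refine ((hu.hasDerivAt.mul hu'.hasDerivAt).mul hω.hasDerivAt).congr_deriv ?_
  have hu'' : deriv (deriv u) r = u r - deriv ω r / ω r * deriv u r := by linarith
  rw [hu'', Pi.mul_apply]
  field_simp
  ring

/-- If u solves -u'' - (ω̄_c'/ω̄_c)u' + u = 0 on [0,∞) with u(0)=1, u'(0)=0, and ω̄_c is a
positive C¹ weight, then u > 0 and u' > 0 on (0,∞). -/
theorem stmt8 (ω : ℝ → ℝ) (hω : ContDiff ℝ 1 ω) (hωpos : ∀ r ∈ Ici (0:ℝ), 0 < ω r)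
    (u : ℝ → ℝ) (hu : ContDiff ℝ 2 u)
    (hode : ∀ r ≥ (0:ℝ), -(deriv (deriv u) r) - (deriv ω r / ω r) * deriv u r + u r = 0)
    (h0 : u 0 = 1) (h0' : deriv u 0 = 0) :
    ∀ r > (0:ℝ), 0 < u r ∧ 0 < deriv u r := by
  have hdu : Differentiable ℝ u := hu.differentiable (by norm_num)
  have hdu' : Differentiable ℝ (deriv u) :=
    (hu.iterate_deriv' 1 1).differentiable one_ne_zero
  set f : ℝ → ℝ := fun s => u s * deriv u s * ω s
  have hf' : ∀ r ∈ Ici (0:ℝ), HasDerivAt f (ω r * (u r ^ 2 + deriv u r ^ 2)) r := fun r hr =>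
    hasDerivAt_mul_deriv_mul_of_ode (hdu r) (hdu' r) (hω.differentiable one_ne_zero r)
      (hωpos r hr).ne' (hode r hr)
  have hmono : MonotoneOn f (Ici 0) :=
    monotoneOn_of_hasDerivWithinAt_nonneg (convex_Ici 0)
      (fun r hr => (hf' r hr).continuousAt.continuousWithinAt)
      (fun r hr => (hf' r (interior_subset hr)).hasDerivWithinAt)
      (fun r hr => mul_nonneg (hωpos r (interior_subset hr)).le (by positivity))
  have hfpos : ∀ r > (0:ℝ), 0 < f r := fun r hr =>
    hmono.pos_of_deriv_pos (by simp [f, h0']) (by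
      rw [(hf' 0 self_mem_Ici).deriv, h0, h0']
      simpa using hωpos 0 self_mem_Ici) hr
  have hupos : ∀ r ∈ Ici (0:ℝ), 0 < u r := fun r hr =>
    isPreconnected_Ici.pos_of_ne_zero hdu.continuous.continuousOn
      (fun s hs hus => by
        rcases (mem_Ici.1 hs).eq_or_lt with rfl | hs
        · simp [h0] at hus
        · simpa [f, hus] using hfpos s hs)
      self_mem_Ici (by simp [h0]) hr
  intro r hr
  have hprod : 0 < u r * deriv u r := pos_of_mul_pos_left (hfpos r hr) (hωpos r hr.le).le
  exact ⟨hupos r hr.le, pos_of_mul_pos_right hprod (hupos r hr.le).le⟩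
end

section
/- Let ω̄ : [0,∞) → (0,∞) be continuous and 0 ≤ t < s < s₀ < s₁ with ∫_s^{s₀} ω̄⁻¹ dr = ∫_{s₀}^{s₁} ω̄⁻¹ dr, and define v on (t,∞) by: v(r) = (∫_t^r ω̄⁻¹ dr')/(∫_t^s ω̄⁻¹ dr') for t < r ≤ s; v(r) = 1 for s < r ≤ s₀; v(r) = 2 - (∫_t^r ω̄⁻¹ dr' - ∫_t^s ω̄⁻¹ dr')/(∫_{s₀}^{s₁} ω̄⁻¹ dr') for s₀ < r ≤ s₁; v(r) = 0 for r > s₁. Then (∫_t^∞ (v')² ω̄ dr)/(∫_t^∞ v² ω̄ dr) ≤ (1 + (∫_t^s ω̄⁻¹ dr')/(∫_s^{s₀} ω̄⁻¹ dr')) · ( ∫_t^s ω̄⁻¹ dr' · ∫_s^{s₀} ω̄ dr' )⁻¹. -/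
open MeasureTheory Set Filter

/-! In the coordinate `F(r) = ∫_t^r ω⁻¹` the test function is piecewise affine, so on each piece
`(v')² ω = k² ω⁻¹` for the slope `k` of that piece: the Dirichlet integral is
`(∫_t^s ω⁻¹)⁻¹ + (∫_{s₀}^{s₁} ω⁻¹)⁻¹`, while the plateau `v = 1` on `(s, s₀]` bounds `∫ v² ω` from
below by `∫_s^{s₀} ω`. The hypothesis `∫_s^{s₀} ω⁻¹ = ∫_{s₀}^{s₁} ω⁻¹` turns the quotient of these
two bounds into the stated one. -/

section Primitive

variable {g : ℝ → ℝ} {t : ℝ}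

theorem hasDerivAt_integral_of_continuousOn_Ici (hg : ContinuousOn g (Ici t)) {r : ℝ}
    (hr : t < r) : HasDerivAt (fun u => ∫ x in t..u, g x) (g r) r :=
  intervalIntegral.integral_hasDerivAt_right
    ((hg.mono Icc_subset_Ici_self).intervalIntegrable_of_Icc hr.le)
    ((hg.mono Ioi_subset_Ici_self).stronglyMeasurableAtFilter isOpen_Ioi r hr)
    (hg.continuousAt (Ici_mem_nhds hr))

theorem continuousOn_integral_of_continuousOn_Ici (hg : ContinuousOn g (Ici t)) {b : ℝ}
    (htb : t ≤ b) : ContinuousOn (fun u => ∫ x in t..u, g x) (Icc t b) := by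
  have hint : IntegrableOn g (uIcc t b) := by
    rw [uIcc_of_le htb]
    exact (hg.mono Icc_subset_Ici_self).integrableOn_Icc
  simpa only [uIcc_of_le htb] using intervalIntegral.continuousOn_primitive_interval hint

theorem intervalIntegral_pos_of_continuousOn_Ici (hg : ContinuousOn g (Ici t))
    (hpos : ∀ r ∈ Ici t, 0 < g r) {a b : ℝ} (hta : t ≤ a) (hab : a < b) :
    0 < ∫ x in a..b, g x :=
  intervalIntegral.intervalIntegral_pos_of_pos_on
    ((hg.mono fun _ hx => hta.trans hx.1).intervalIntegrable_of_Icc hab.le)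
    (fun _ hx => hpos _ (hta.trans hx.1.le)) hab

end Primitive

section AffinePiece

variable {ω F v : ℝ → ℝ} {a b c k : ℝ}

theorem deriv_eq_of_eqOn_affine {U : Set ℝ} {r F' : ℝ} (hU : IsOpen U)
    (hv : EqOn v (fun u => c + k * F u) U) (hr : r ∈ U) (hF : HasDerivAt F F' r) :
    deriv v r = k * F' :=
  (((hF.const_mul k).const_add c).congr_of_eventuallyEq
    (hv.eventuallyEq_of_mem (hU.mem_nhds hr))).deriv

theorem intervalIntegrable_sq_mul_of_eqOn_affine (hab : a ≤ b) (hω : ContinuousOn ω (Icc a b))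
    (hF : ContinuousOn F (Icc a b)) (hv : EqOn v (fun u => c + k * F u) (Ioo a b)) :
    IntervalIntegrable (fun r => v r ^ 2 * ω r) volume a b := by
  have hcont : ContinuousOn (fun u => (c + k * F u) ^ 2 * ω u) (Icc a b) :=
    ((continuousOn_const.add (continuousOn_const.mul hF)).pow 2).mul hω
  refine (hcont.intervalIntegrable_of_Icc hab).congr_uIoo ?_
  rw [uIoo_of_le hab]
  intro r hr
  simp only [hv hr]

theorem eqOn_deriv_sq_mul_of_eqOn_affine (hω0 : ∀ r ∈ Ioo a b, ω r ≠ 0)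
    (hF' : ∀ r ∈ Ioo a b, HasDerivAt F (ω r)⁻¹ r) (hv : EqOn v (fun u => c + k * F u) (Ioo a b)) :
    EqOn (fun r => deriv v r ^ 2 * ω r) (fun r => k ^ 2 * (ω r)⁻¹) (Ioo a b) := by
  intro r hr
  have hωr := hω0 r hr
  simp only [deriv_eq_of_eqOn_affine isOpen_Ioo hv hr (hF' r hr)]
  field_simp

theorem intervalIntegrable_deriv_sq_mul_of_eqOn_affine (hab : a ≤ b)
    (hω : ContinuousOn ω (Icc a b)) (hω0 : ∀ r ∈ Icc a b, ω r ≠ 0)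
    (hF' : ∀ r ∈ Ioo a b, HasDerivAt F (ω r)⁻¹ r) (hv : EqOn v (fun u => c + k * F u) (Ioo a b)) :
    IntervalIntegrable (fun r => deriv v r ^ 2 * ω r) volume a b := by
  have hcont : ContinuousOn (fun r => k ^ 2 * (ω r)⁻¹) (Icc a b) :=
    continuousOn_const.mul (hω.inv₀ hω0)
  refine (hcont.intervalIntegrable_of_Icc hab).congr_uIoo ?_
  rw [uIoo_of_le hab]
  exact (eqOn_deriv_sq_mul_of_eqOn_affine (fun r hr => hω0 r (Ioo_subset_Icc_self hr)) hF' hv).symm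

theorem integral_deriv_sq_mul_of_eqOn_affine (hab : a ≤ b) (hω0 : ∀ r ∈ Ioo a b, ω r ≠ 0)
    (hF' : ∀ r ∈ Ioo a b, HasDerivAt F (ω r)⁻¹ r) (hv : EqOn v (fun u => c + k * F u) (Ioo a b)) :
    ∫ r in a..b, deriv v r ^ 2 * ω r = k ^ 2 * ∫ r in a..b, (ω r)⁻¹ := by
  rw [intervalIntegral.integral_congr_Ioo_of_le hab (eqOn_deriv_sq_mul_of_eqOn_affine hω0 hF' hv),
    intervalIntegral.integral_const_mul]

end AffinePiece

theorem integral_Ioi_eq_add_add_of_eqOn_zero {f : ℝ → ℝ} {t s s₀ s₁ : ℝ}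
    (h₁ : IntervalIntegrable f volume t s) (h₂ : IntervalIntegrable f volume s s₀)
    (h₃ : IntervalIntegrable f volume s₀ s₁) (hts₁ : t ≤ s₁) (hf : ∀ x ∈ Ioi s₁, f x = 0) :
    ∫ x in Ioi t, f x = (∫ x in t..s, f x) + (∫ x in s..s₀, f x) + ∫ x in s₀..s₁, f x := by
  rw [intervalIntegral.integral_add_adjacent_intervals h₁ h₂,
    intervalIntegral.integral_add_adjacent_intervals (h₁.trans h₂) h₃,
    intervalIntegral.integral_of_le hts₁]
  exact setIntegral_eq_of_subset_of_forall_sdiff_eq_zero measurableSet_Ioi Ioc_subset_Ioi_self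
    fun x hx => hf x (not_le.1 fun h => hx.2 ⟨hx.1, h⟩)

noncomputable def testFunction (ω : ℝ → ℝ) (t s s₀ s₁ r : ℝ) : ℝ :=
  if r ≤ s then (∫ x in Ioc t r, (ω x)⁻¹) / ∫ x in Ioc t s, (ω x)⁻¹
  else if r ≤ s₀ then 1
  else if r ≤ s₁ then
    2 - ((∫ x in Ioc t r, (ω x)⁻¹) - ∫ x in Ioc t s, (ω x)⁻¹) / ∫ x in Ioc s₀ s₁, (ω x)⁻¹
  else 0

namespace testFunction

variable {ω v : ℝ → ℝ} {t s s₀ s₁ : ℝ}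

theorem eqOn_Ioo_left (hv : EqOn v (testFunction ω t s s₀ s₁) (Ioi t)) :
    EqOn v (fun u => 0 + (∫ x in t..s, (ω x)⁻¹)⁻¹ * ∫ x in t..u, (ω x)⁻¹) (Ioo t s) := by
  intro r hr
  dsimp only
  rw [hv hr.1, testFunction, if_pos hr.2.le, intervalIntegral.integral_of_le hr.1.le,
    intervalIntegral.integral_of_le (hr.1.trans hr.2).le]
  ring

theorem eqOn_Ioo_middle (hv : EqOn v (testFunction ω t s s₀ s₁) (Ioi t)) (hts : t < s) :
    EqOn v (fun u => 1 + 0 * ∫ x in t..u, (ω x)⁻¹) (Ioo s s₀) := by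
  intro r hr
  rw [hv (hts.trans hr.1), testFunction, if_neg (not_le.2 hr.1), if_pos hr.2.le]
  ring

theorem eqOn_Ioo_right (hv : EqOn v (testFunction ω t s s₀ s₁) (Ioi t)) (hts : t < s)
    (hss : s < s₀) :
    EqOn v (fun u => (2 + (∫ x in t..s, (ω x)⁻¹) / ∫ x in s₀..s₁, (ω x)⁻¹) +
      -(∫ x in s₀..s₁, (ω x)⁻¹)⁻¹ * ∫ x in t..u, (ω x)⁻¹) (Ioo s₀ s₁) := by
  intro r hr
  have hsr : s < r := hss.trans hr.1
  dsimp only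
  rw [hv (hts.trans hsr), testFunction, if_neg (not_le.2 hsr), if_neg (not_le.2 hr.1),
    if_pos hr.2.le, intervalIntegral.integral_of_le (hts.trans hsr).le,
    intervalIntegral.integral_of_le hts.le, intervalIntegral.integral_of_le (hr.1.trans hr.2).le]
  ring

theorem eq_zero_of_lt (hv : EqOn v (testFunction ω t s s₀ s₁) (Ioi t)) (hts : t < s)
    (hss : s < s₀) (hs₀₁ : s₀ < s₁) {r : ℝ} (hr : s₁ < r) : v r = 0 := by
  have hs₀r : s₀ < r := hs₀₁.trans hr
  have hsr : s < r := hss.trans hs₀r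
  rw [hv (hts.trans hsr), testFunction, if_neg (not_le.2 hsr), if_neg (not_le.2 hs₀r),
    if_neg (not_le.2 hr)]

theorem integral_deriv_sq_mul (hωc : ContinuousOn ω (Ici t)) (hωpos : ∀ r ∈ Ici t, 0 < ω r)
    (hts : t < s) (hss : s < s₀) (hs₀₁ : s₀ < s₁)
    (hv : EqOn v (testFunction ω t s s₀ s₁) (Ioi t)) :
    ∫ r in Ioi t, deriv v r ^ 2 * ω r =
      (∫ x in t..s, (ω x)⁻¹)⁻¹ + (∫ x in s₀..s₁, (ω x)⁻¹)⁻¹ := by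
  have hinv : ContinuousOn (fun x => (ω x)⁻¹) (Ici t) :=
    hωc.inv₀ fun r hr => (hωpos r hr).ne'
  have piece : ∀ {a b c k : ℝ}, t ≤ a → a ≤ b →
      EqOn v (fun u => c + k * ∫ x in t..u, (ω x)⁻¹) (Ioo a b) →
      IntervalIntegrable (fun r => deriv v r ^ 2 * ω r) volume a b ∧
        ∫ r in a..b, deriv v r ^ 2 * ω r = k ^ 2 * ∫ r in a..b, (ω r)⁻¹ := by
    intro a b c k hta hab hvab
    have hω0 : ∀ r ∈ Icc a b, ω r ≠ 0 := fun r hr => (hωpos r (hta.trans hr.1)).ne'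
    have hF' : ∀ r ∈ Ioo a b, HasDerivAt (fun u => ∫ x in t..u, (ω x)⁻¹) (ω r)⁻¹ r :=
      fun r hr => hasDerivAt_integral_of_continuousOn_Ici hinv (hta.trans_lt hr.1)
    exact ⟨intervalIntegrable_deriv_sq_mul_of_eqOn_affine hab
        (hωc.mono fun _ hx => hta.trans hx.1) hω0 hF' hvab,
      integral_deriv_sq_mul_of_eqOn_affine hab (fun r hr => hω0 r (Ioo_subset_Icc_self hr)) hF'
        hvab⟩
  obtain ⟨i₁, e₁⟩ := piece le_rfl hts.le (eqOn_Ioo_left hv)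
  obtain ⟨i₂, e₂⟩ := piece hts.le hss.le (eqOn_Ioo_middle hv hts)
  obtain ⟨i₃, e₃⟩ := piece (hts.trans hss).le hs₀₁.le (eqOn_Ioo_right hv hts hss)
  have htail : ∀ r ∈ Ioi s₁, deriv v r ^ 2 * ω r = 0 := fun r hr => by
    have hv0 : v =ᶠ[nhds r] fun _ => 0 :=
      eventually_gt_nhds hr |>.mono fun u hu => eq_zero_of_lt hv hts hss hs₀₁ hu
    rw [hv0.deriv_eq, deriv_const, sq, zero_mul, zero_mul]
  have hA := intervalIntegral_pos_of_continuousOn_Ici hinv (fun r hr => inv_pos.2 (hωpos r hr))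
    le_rfl hts
  have hB := intervalIntegral_pos_of_continuousOn_Ici hinv (fun r hr => inv_pos.2 (hωpos r hr))
    (hts.trans hss).le hs₀₁
  rw [integral_Ioi_eq_add_add_of_eqOn_zero i₁ i₂ i₃ (hts.trans (hss.trans hs₀₁)).le htail,
    e₁, e₂, e₃]
  field_simp
  ring

theorem integral_le_integral_sq_mul (hωc : ContinuousOn ω (Ici t))
    (hωpos : ∀ r ∈ Ici t, 0 < ω r) (hts : t < s) (hss : s < s₀) (hs₀₁ : s₀ < s₁)
    (hv : EqOn v (testFunction ω t s s₀ s₁) (Ioi t)) :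
    ∫ x in s..s₀, ω x ≤ ∫ r in Ioi t, v r ^ 2 * ω r := by
  have hts₁ : t ≤ s₁ := (hts.trans (hss.trans hs₀₁)).le
  have hF := continuousOn_integral_of_continuousOn_Ici
    (hωc.inv₀ fun r hr => (hωpos r hr).ne') hts₁
  have piece : ∀ {a b c k : ℝ}, t ≤ a → a ≤ b → b ≤ s₁ →
      EqOn v (fun u => c + k * ∫ x in t..u, (ω x)⁻¹) (Ioo a b) →
      IntervalIntegrable (fun r => v r ^ 2 * ω r) volume a b := fun hta hab hbs₁ hvab =>
    intervalIntegrable_sq_mul_of_eqOn_affine hab (hωc.mono fun _ hx => hta.trans hx.1)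
      (hF.mono (Icc_subset_Icc hta hbs₁)) hvab
  have nonneg : ∀ {a b : ℝ}, t ≤ a → a ≤ b → 0 ≤ ∫ r in a..b, v r ^ 2 * ω r := fun hta hab =>
    intervalIntegral.integral_nonneg hab fun u hu =>
      mul_nonneg (sq_nonneg _) (hωpos u (hta.trans hu.1)).le
  have plateau : ∫ r in s..s₀, v r ^ 2 * ω r = ∫ x in s..s₀, ω x :=
    intervalIntegral.integral_congr_Ioo_of_le hss.le fun r hr => by
      simp only [eqOn_Ioo_middle hv hts hr]
      ring
  rw [integral_Ioi_eq_add_add_of_eqOn_zero (piece le_rfl hts.le (hss.trans hs₀₁).le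
      (eqOn_Ioo_left hv))
    (piece hts.le hss.le hs₀₁.le (eqOn_Ioo_middle hv hts))
    (piece (hts.trans hss).le hs₀₁.le le_rfl (eqOn_Ioo_right hv hts hss)) hts₁
    fun r hr => by simp only [eq_zero_of_lt hv hts hss hs₀₁ hr, sq, zero_mul], plateau]
  linarith [nonneg le_rfl hts.le, nonneg (hts.trans hss).le hs₀₁.le]

end testFunction

/-- Necessity test function, finite-volume case: for the Lipschitz function v rising linearly in
the coordinate ∫_t^r ω̄⁻¹ on (t,s], equal to 1 on (s,s₀], decaying on (s₀,s₁] (with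
∫_s^{s₀} ω̄⁻¹ = ∫_{s₀}^{s₁} ω̄⁻¹), and 0 beyond s₁, the Rayleigh quotient is at most
(1 + ∫_t^s ω̄⁻¹ / ∫_s^{s₀} ω̄⁻¹) · (∫_t^s ω̄⁻¹ · ∫_s^{s₀} ω̄)⁻¹. -/
theorem stmt11 (ω : ℝ → ℝ)
    (hωc : ContinuousOn ω (Ici 0)) (hωpos : ∀ r ∈ Ici (0:ℝ), 0 < ω r)
    (t s s₀ s₁ : ℝ) (ht : 0 ≤ t) (hts : t < s) (hss : s < s₀) (hs₀₁ : s₀ < s₁)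
    (heq : (∫ r in Ioc s s₀, (ω r)⁻¹) = ∫ r in Ioc s₀ s₁, (ω r)⁻¹)
    (v : ℝ → ℝ)
    (hv : ∀ r ∈ Ioi t, v r =
      if r ≤ s then (∫ x in Ioc t r, (ω x)⁻¹) / ∫ x in Ioc t s, (ω x)⁻¹
      else if r ≤ s₀ then 1
      else if r ≤ s₁ then
        2 - ((∫ x in Ioc t r, (ω x)⁻¹) - ∫ x in Ioc t s, (ω x)⁻¹) / ∫ x in Ioc s₀ s₁, (ω x)⁻¹
      else 0) :
    (∫ r in Ioi t, (deriv v r)^2 * ω r) / (∫ r in Ioi t, (v r)^2 * ω r)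
      ≤ (1 + (∫ x in Ioc t s, (ω x)⁻¹) / ∫ x in Ioc s s₀, (ω x)⁻¹) *
          ((∫ x in Ioc t s, (ω x)⁻¹) * ∫ x in Ioc s s₀, ω x)⁻¹ := by
  have hωt : ContinuousOn ω (Ici t) := hωc.mono (Ici_subset_Ici.2 ht)
  have hωt_pos : ∀ r ∈ Ici t, 0 < ω r := fun r hr => hωpos r (ht.trans hr)
  have hinv_pos : ∀ r ∈ Ici t, 0 < (ω r)⁻¹ := fun r hr => inv_pos.2 (hωt_pos r hr)
  have hinv : ContinuousOn (fun x => (ω x)⁻¹) (Ici t) := hωt.inv₀ fun r hr => (hωt_pos r hr).ne'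
  rw [testFunction.integral_deriv_sq_mul hωt hωt_pos hts hss hs₀₁ hv,
    intervalIntegral.integral_of_le hs₀₁.le, ← heq]
  simp only [← intervalIntegral.integral_of_le hts.le, ← intervalIntegral.integral_of_le hss.le]
  have hA := intervalIntegral_pos_of_continuousOn_Ici hinv hinv_pos le_rfl hts
  have hC := intervalIntegral_pos_of_continuousOn_Ici hinv hinv_pos hts.le hss
  have hW := intervalIntegral_pos_of_continuousOn_Ici hωt hωt_pos hts.le hss
  have hD := testFunction.integral_le_integral_sq_mul hωt hωt_pos hts hss hs₀₁ hv
  set A := ∫ x in t..s, (ω x)⁻¹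
  set C := ∫ x in s..s₀, (ω x)⁻¹
  set W := ∫ x in s..s₀, ω x
  calc (A⁻¹ + C⁻¹) / ∫ r in Ioi t, v r ^ 2 * ω r ≤ (A⁻¹ + C⁻¹) / W :=
        div_le_div_of_nonneg_left (by positivity) hW hD
    _ = (1 + A / C) * (A * W)⁻¹ := by field_simp
end

section
/- Let ω̄ : [0,∞) → (0,∞) be continuous with B := sup_{s>t} ( ∫_t^s ω̄⁻¹ dr · ∫_s^∞ ω̄ dr ) < ∞ for some t ≥ 0, and suppose the coerciveness inequality (1/2)∫_t^∞ (ū')² ω̄ dr - (c²/4)∫_t^∞ ū² ω̄ dr ≤ D(u) holds for compactly supported smooth u, where ū is the spherical average and D(u) the Dirichlet integral. Then ( 1/(8B) - c²/4 ) ∫ u² dμ ≤ D(u), i.e. the Dirichlet Rayleigh quotient λ₀(E_t) ≥ 1/(8B) - c²/4. -/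
open MeasureTheory Set Filter

lemma cs_interval {f g : ℝ → ℝ} {a b : ℝ} (hab : a ≤ b)
    (hf : ContinuousOn f (Icc a b)) (hg : ContinuousOn g (Icc a b)) :
    (∫ x in a..b, f x * g x) ^ 2 ≤ (∫ x in a..b, f x ^ 2) * (∫ x in a..b, g x ^ 2) := by
  have huIcc : uIcc a b = Icc a b := uIcc_of_le hab
  have hif2 : IntervalIntegrable (fun x => f x ^ 2) volume a b :=
    ((hf.pow 2).mono huIcc.subset).intervalIntegrable
  have hig2 : IntervalIntegrable (fun x => g x ^ 2) volume a b :=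
    ((hg.pow 2).mono huIcc.subset).intervalIntegrable
  have hifg : IntervalIntegrable (fun x => f x * g x) volume a b :=
    ((hf.mul hg).mono huIcc.subset).intervalIntegrable
  set A := ∫ x in a..b, f x ^ 2 with hA
  set C := ∫ x in a..b, g x ^ 2 with hC
  set M := ∫ x in a..b, f x * g x with hM
  have key : ∀ l : ℝ, 0 ≤ A * (l * l) + (2 * M) * l + C := by
    intro l
    have expand : ∀ x : ℝ, (l * f x + g x) ^ 2
        = (l * l) * f x ^ 2 + ((2 * l) * (f x * g x) + g x ^ 2) := by
      intro x; ring
    have h1 : (0:ℝ) ≤ ∫ x in a..b, (l * f x + g x) ^ 2 :=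
      intervalIntegral.integral_nonneg hab (fun x _ => sq_nonneg _)
    have h2 : (∫ x in a..b, (l * f x + g x) ^ 2)
        = (l * l) * A + ((2 * l) * M + C) := by
      rw [show (fun x => (l * f x + g x) ^ 2)
        = fun x => (l * l) * f x ^ 2 + ((2 * l) * (f x * g x) + g x ^ 2) from funext expand]
      rw [intervalIntegral.integral_add (hif2.const_mul _) ((hifg.const_mul _).add hig2),
        intervalIntegral.integral_add (hifg.const_mul _) hig2,
        intervalIntegral.integral_const_mul, intervalIntegral.integral_const_mul]
    rw [h2] at h1
    linarith [h1]
  have hd := discrim_le_zero key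
  rw [discrim] at hd
  nlinarith [hd]


lemma conv_integral {f : ℝ → ℝ} {t a R : ℝ} (hta : t ≤ a) (haR : a ≤ R)
    (hf : ContinuousOn f (Icc t R))
    (h0 : ∀ x, x ≤ a → f x = 0) (h1 : ∀ x, R ≤ x → f x = 0) :
    ∫ x in Ioi t, f x = ∫ x in a..R, f x := by
  have htR : t ≤ R := hta.trans haR
  have hint1 : IntegrableOn f (Ioc t R) :=
    (hf.integrableOn_Icc).mono_set Ioc_subset_Icc_self
  have hint2 : IntegrableOn f (Ioi R) :=
    (integrableOn_congr_fun (fun x hx => h1 x (le_of_lt hx)) measurableSet_Ioi).mpr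
      (integrableOn_zero)
  have hsplit : Ioi t = Ioc t R ∪ Ioi R := (Ioc_union_Ioi_eq_Ioi htR).symm
  have hz : ∫ x in Ioi R, f x = 0 :=
    setIntegral_eq_zero_of_forall_eq_zero (fun x hx => h1 x (le_of_lt hx))
  rw [hsplit, setIntegral_union (Ioc_disjoint_Ioi le_rfl) measurableSet_Ioi hint1 hint2,
    hz, add_zero, ← intervalIntegral.integral_of_le htR]
  have hita : IntervalIntegrable f volume t a :=
    ((hf.mono (Icc_subset_Icc le_rfl haR)).mono (uIcc_of_le hta).subset).intervalIntegrable
  have hiaR : IntervalIntegrable f volume a R :=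
    ((hf.mono (Icc_subset_Icc hta le_rfl)).mono (uIcc_of_le haR).subset).intervalIntegrable
  rw [← intervalIntegral.integral_add_adjacent_intervals hita hiaR]
  have : ∫ x in t..a, f x = 0 := by
    rw [intervalIntegral.integral_of_le hta]
    exact setIntegral_eq_zero_of_forall_eq_zero (fun x hx => h0 x hx.2)
  rw [this, zero_add]


lemma arith_final {B N I2 c D : ℝ} (hB : 0 < B) (hkey : N ≤ 4*B*I2)
    (hcoer : (1/2)*I2 - (c^2/4)*N ≤ D) : (1/(8*B) - c^2/4)*N ≤ D := by
  have h8B : (0:ℝ) < 8*B := by linarith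
  have hstep : (1/(8*B))*N ≤ (1/2)*I2 := by
    rw [div_mul_eq_mul_div, div_le_iff₀ h8B]
    nlinarith [hkey]
  calc (1/(8*B) - c^2/4) * N = (1/(8*B))*N - (c^2/4)*N := by ring
    _ ≤ (1/2)*I2 - (c^2/4)*N := by linarith
    _ ≤ D := hcoer

/-- Quantitative lower bound on the Dirichlet Rayleigh quotient: if
B ≥ ∫_t^s ω̄⁻¹ · ∫_s^∞ ω̄ for all s > t (B < ∞, B > 0) and the coerciveness inequality
(1/2)∫(ū')²ω̄ - (c²/4)∫ū²ω̄ ≤ D holds, then (1/(8B) - c²/4)·N ≤ D where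
N = ∫ u² dμ = ∫ ū² ω̄ dr. -/
theorem stmt14 (ω : ℝ → ℝ) (t B c : ℝ) (ht : 0 ≤ t) (hB : 0 < B)
    (hωc : ContinuousOn ω (Ici 0)) (hωpos : ∀ r ∈ Ici (0:ℝ), 0 < ω r)
    (hωint : IntegrableOn ω (Ioi t))
    (hBsup : ∀ s ∈ Ioi t, (∫ r in Ioc t s, (ω r)⁻¹) * ∫ r in Ioi s, ω r ≤ B)
    (ubar : ℝ → ℝ) (hubar : ContDiff ℝ (⊤ : ℕ∞) ubar) (hcpt : HasCompactSupport ubar)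
    (hsupp : tsupport ubar ⊆ Ioi t)
    (D N : ℝ)
    (hN : N = ∫ r in Ioi t, (ubar r)^2 * ω r)
    (hcoer : (1/2) * (∫ r in Ioi t, (deriv ubar r)^2 * ω r)
        - (c^2/4) * (∫ r in Ioi t, (ubar r)^2 * ω r) ≤ D) :
    (1/(8*B) - c^2/4) * N ≤ D := by
  have hu_c : Continuous ubar := hubar.continuous
  have hd_c : Continuous (deriv ubar) := hubar.continuous_deriv (by simp)
  rcases (tsupport ubar).eq_empty_or_nonempty with hKe | hKne
  · have hu0 : ubar = 0 := by rwa [tsupport_eq_empty_iff] at hKe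
    have hN0 : N = 0 := by rw [hN, hu0]; simp
    rw [hu0] at hcoer
    have hderiv0 : deriv (0:ℝ→ℝ) = fun _ => (0:ℝ) := by
      funext x; exact deriv_const x 0
    rw [hderiv0] at hcoer
    simp at hcoer
    rw [hN0]
    simpa using hcoer
  · have hKcpt : IsCompact (tsupport ubar) := hcpt
    have hbb : BddBelow (tsupport ubar) := hKcpt.bddBelow
    have hba : BddAbove (tsupport ubar) := hKcpt.bddAbove
    have ha₀K : sInf (tsupport ubar) ∈ tsupport ubar := hKcpt.sInf_mem hKne
    have hs₁K : sSup (tsupport ubar) ∈ tsupport ubar := hKcpt.sSup_mem hKne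
    set a₀ := sInf (tsupport ubar) with ha₀def
    set s₁ := sSup (tsupport ubar) with hs₁def
    have hta₀ : t < a₀ := hsupp ha₀K
    have ha₀s₁ : a₀ ≤ s₁ := le_csSup hba ha₀K
    set a := (t + a₀)/2 with ha_def
    set R := s₁ + 1 with hR_def
    have hta : t < a := by rw [ha_def]; linarith
    have haa₀ : a < a₀ := by rw [ha_def]; linarith
    have haR : a < R := by rw [ha_def, hR_def]; linarith
    have htR : t < R := hta.trans haR
    -- vanishing of ubar and deriv ubar outside (a, R)
    have hnotK : ∀ x : ℝ, x ≤ a ∨ R ≤ x → x ∉ tsupport ubar := by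
      intro x hx hmem
      rcases hx with hx | hx
      · exact absurd (csInf_le hbb hmem) (by rw [← ha₀def]; linarith)
      · exact absurd (le_csSup hba hmem) (by rw [← hs₁def]; rw [hR_def] at hx; linarith)
    have hu0 : ∀ x : ℝ, x ≤ a ∨ R ≤ x → ubar x = 0 :=
      fun x hx => image_eq_zero_of_notMem_tsupport (hnotK x hx)
    have hd0 : ∀ x : ℝ, x ≤ a ∨ R ≤ x → deriv ubar x = 0 := by
      intro x hx
      by_contra hne
      exact hnotK x hx (support_deriv_subset (by simpa using hne))
    -- ω basics on [t, ∞)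
    have hωt : ContinuousOn ω (Ici t) := hωc.mono (Ici_subset_Ici.mpr ht)
    have hωpos' : ∀ x, t ≤ x → 0 < ω x := fun x hx => hωpos x (le_trans ht hx)
    have hωinv : ContinuousOn (fun s => (ω s)⁻¹) (Ici t) :=
      hωt.inv₀ (fun x hx => (hωpos' x hx).ne')
    -- the primitive h
    set h : ℝ → ℝ := fun r => ∫ s in t..r, (ω s)⁻¹ with hh_def
    have hint_inv : ∀ x y, t ≤ x → t ≤ y → IntervalIntegrable (fun s => (ω s)⁻¹) volume x y := by
      intro x y hx hy
      exact (hωinv.mono (fun z hz => le_trans (le_min hx hy) (by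
        rcases le_total x y with hxy | hxy
        · rw [uIcc_of_le hxy] at hz; exact le_trans (min_le_left _ _) hz.1
        · rw [uIcc_of_ge hxy] at hz; exact le_trans (min_le_right _ _) hz.1))).intervalIntegrable
    have hh_deriv : ∀ x ∈ Ioi t, HasDerivAt h (ω x)⁻¹ x := by
      intro x hx
      exact intervalIntegral.integral_hasDerivAt_right (hint_inv t x le_rfl (le_of_lt hx))
        ((hωinv.mono Ioi_subset_Ici_self).stronglyMeasurableAtFilter isOpen_Ioi x hx)
        ((hωinv.mono Ioi_subset_Ici_self).continuousAt (isOpen_Ioi.mem_nhds hx))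
    have hh_pos : ∀ x, t < x → 0 < h x := by
      intro x hx
      exact intervalIntegral.intervalIntegral_pos_of_pos_on (hint_inv t x le_rfl (le_of_lt hx))
        (fun s hs => inv_pos.mpr (hωpos' s (le_of_lt hs.1))) hx
    have hh_mono : ∀ x y, t < x → x ≤ y → h x ≤ h y := by
      intro x y hx hxy
      have := intervalIntegral.integral_add_adjacent_intervals
        (hint_inv t x le_rfl (le_of_lt hx)) (hint_inv x y (le_of_lt hx) (le_of_lt (lt_of_lt_of_le hx hxy)))
      have hnn : (0:ℝ) ≤ ∫ s in x..y, (ω s)⁻¹ :=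
        intervalIntegral.integral_nonneg hxy
          (fun s hs => le_of_lt (inv_pos.mpr (hωpos' s (le_trans (le_of_lt hx) hs.1))))
      rw [hh_def]; dsimp only; linarith [this]
    -- continuity of h, sqrt h, etc.
    have hci : ∀ (f : ℝ → ℝ), ContinuousOn f (Ioi t) → ∀ x y, t < x → t < y →
        IntervalIntegrable f volume x y := by
      intro f hf x y hx hy
      apply (hf.mono ?_).intervalIntegrable
      intro z hz
      exact lt_of_lt_of_le (lt_min hx hy) hz.1
    have hh_cOn : ContinuousOn h (Ioi t) :=
      fun x hx => ((hh_deriv x hx).continuousAt).continuousWithinAt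
    set q : ℝ → ℝ := fun s => Real.sqrt (h s) with hq_def
    have hq_cOn : ContinuousOn q (Ioi t) := Real.continuous_sqrt.comp_continuousOn hh_cOn
    have hq_pos : ∀ x, t < x → 0 < q x := fun x hx => Real.sqrt_pos.mpr (hh_pos x hx)
    have hq_sq : ∀ x, t < x → q x ^ 2 = h x :=
      fun x hx => Real.sq_sqrt (hh_pos x hx).le
    have hq_deriv : ∀ x ∈ Ioi t, HasDerivAt q (1/(2 * q x) * (ω x)⁻¹) x := by
      intro x hx
      exact (Real.hasDerivAt_sqrt (hh_pos x hx).ne').comp x (hh_deriv x hx)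
    have hω_cOn : ContinuousOn ω (Ioi t) := hωt.mono Ioi_subset_Ici_self
    have hωinv_cOn : ContinuousOn (fun s => (ω s)⁻¹) (Ioi t) := hωinv.mono Ioi_subset_Ici_self
    set w : ℝ → ℝ := fun s => ω s * q s with hw_def
    have hw_cOn : ContinuousOn w (Ioi t) := hω_cOn.mul hq_cOn
    -- G and the B-bound
    set G : ℝ → ℝ := fun r => ∫ s in r..R, ω s with hG_def
    have hGB : ∀ x, t < x → x ≤ R → h x * G x ≤ B := by
      intro x hx hxR
      have hBx := hBsup x hx
      rw [← intervalIntegral.integral_of_le (le_of_lt hx)] at hBx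
      have hGle : G x ≤ ∫ s in Ioi x, ω s := by
        rw [hG_def]; dsimp only
        rw [intervalIntegral.integral_of_le hxR]
        apply setIntegral_mono_set (hωint.mono_set (Ioi_subset_Ioi (le_of_lt hx)))
        · refine (ae_restrict_iff' measurableSet_Ioi).mpr (ae_of_all _ ?_)
          exact fun s hs => (hωpos' s (le_of_lt (hx.trans hs))).le
        · exact HasSubset.Subset.eventuallyLE Ioc_subset_Ioi_self
      have hhx : 0 ≤ h x := (hh_pos x hx).le
      calc h x * G x ≤ h x * ∫ s in Ioi x, ω s := mul_le_mul_of_nonneg_left hGle hhx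
        _ ≤ B := hBx
    have hG_nonneg : ∀ x, t < x → x ≤ R → 0 ≤ G x := by
      intro x hx hxR
      exact intervalIntegral.integral_nonneg hxR
        (fun s hs => (hωpos' s (le_trans (le_of_lt hx) hs.1)).le)
    have hG_derivAll : ∀ x ∈ Ioi t, HasDerivAt G (-(ω x)) x := by
      intro x hxt
      have h1 : HasDerivAt (fun y => ∫ s in R..y, ω s) (ω x) x :=
        intervalIntegral.integral_hasDerivAt_right (hci ω hω_cOn R x htR hxt)
          (hω_cOn.stronglyMeasurableAtFilter isOpen_Ioi x hxt)
          (hω_cOn.continuousAt (isOpen_Ioi.mem_nhds hxt))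
      have h2 : G = fun y => -∫ s in R..y, ω s := by
        funext y; rw [hG_def]; exact intervalIntegral.integral_symm R y
      rw [h2]; exact h1.neg
    have hG_cOn : ContinuousOn G (Ioi t) :=
      fun x hx => ((hG_derivAll x hx).continuousAt).continuousWithinAt
    have hv'_cOn : ContinuousOn (fun x => 1/(2 * q x) * (ω x)⁻¹) (Ioi t) :=
      (continuousOn_const.div (continuousOn_const.mul hq_cOn)
        (fun x hx => (mul_pos two_pos (hq_pos x hx)).ne')).mul hωinv_cOn
    -- Step C : the key kernel bound
    have hK2B : ∀ r, a ≤ r → r ≤ R → (∫ s in r..R, w s) * q r ≤ 2*B := by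
      intro r har hrR
      have htr : t < r := hta.trans_le har
      have hsub : Icc r R ⊆ Ioi t := fun z hz => htr.trans_le hz.1
      have huIcc : uIcc r R = Icc r R := uIcc_of_le hrR
      -- derivative data on [r, R]
      have hG_deriv : ∀ x ∈ uIcc r R, HasDerivAt G (-(ω x)) x :=
        fun x hx => hG_derivAll x (hsub (huIcc ▸ hx))
      have hq_deriv' : ∀ x ∈ uIcc r R, HasDerivAt q (1/(2 * q x) * (ω x)⁻¹) x :=
        fun x hx => hq_deriv x (hsub (huIcc ▸ hx))
      have hωint' : IntervalIntegrable (fun x => -(ω x)) volume r R :=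
        (hci ω hω_cOn r R htr htR).neg
      have hv'int : IntervalIntegrable (fun x => 1/(2 * q x) * (ω x)⁻¹) volume r R :=
        hci _ hv'_cOn r R htr htR
      have hIBP := intervalIntegral.integral_mul_deriv_eq_deriv_mul hG_deriv hq_deriv'
        hωint' hv'int
      have hGR : G R = 0 := intervalIntegral.integral_same
      have hneg : (∫ x in r..R, -(ω x) * q x) = - ∫ x in r..R, w x := by
        simp only [hw_def, neg_mul]
        exact intervalIntegral.integral_neg
      rw [hGR, hneg] at hIBP
      -- hIBP : ∫ G * v' = 0 * q R - G r * q r - (- ∫ w)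
      have hsplit : (∫ x in r..R, w x) = G r * q r + ∫ x in r..R, G x * (1/(2 * q x) * (ω x)⁻¹) := by
        linarith [hIBP]
      -- bound the correction term
      have hinv_deriv : ∀ x ∈ uIcc r R,
          HasDerivAt (fun y => -(q y)⁻¹) ((1/(2 * q x) * (ω x)⁻¹)/(q x)^2) x := by
        intro x hx
        have hxt : x ∈ Ioi t := hsub (huIcc ▸ hx)
        have h1 := ((hq_deriv x hxt).inv (hq_pos x hxt).ne').neg
        refine h1.congr_deriv ?_
        ring
      have hψ_cOn : ContinuousOn (fun x => (1/(2 * q x) * (ω x)⁻¹)/(q x)^2) (Ioi t) :=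
        hv'_cOn.div (hq_cOn.pow 2) (fun x hx => pow_ne_zero 2 (hq_pos x hx).ne')
      have hψint : IntervalIntegrable (fun x => (1/(2 * q x) * (ω x)⁻¹)/(q x)^2) volume r R :=
        hci _ hψ_cOn r R htr htR
      have hψeq : (∫ x in r..R, (1/(2 * q x) * (ω x)⁻¹)/(q x)^2) = -(q R)⁻¹ - -(q r)⁻¹ :=
        intervalIntegral.integral_eq_sub_of_hasDerivAt hinv_deriv hψint
      have hpt : ∀ x ∈ Icc r R, G x * (1/(2 * q x) * (ω x)⁻¹)
          ≤ B * ((1/(2 * q x) * (ω x)⁻¹)/(q x)^2) := by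
        intro x hx
        have hxt : t < x := htr.trans_le hx.1
        have hv'nn : 0 ≤ 1/(2 * q x) * (ω x)⁻¹ :=
          mul_nonneg (le_of_lt (one_div_pos.mpr (mul_pos two_pos (hq_pos x hxt))))
            (inv_nonneg.mpr (hωpos' x hxt.le).le)
        have hGx : G x ≤ B / h x := (le_div_iff₀ (hh_pos x hxt)).mpr
          (by linarith [hGB x hxt hx.2, mul_comm (h x) (G x)])
        calc G x * (1/(2 * q x) * (ω x)⁻¹)
            ≤ (B / h x) * (1/(2 * q x) * (ω x)⁻¹) := mul_le_mul_of_nonneg_right hGx hv'nn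
          _ = B * ((1/(2 * q x) * (ω x)⁻¹)/(q x)^2) := by rw [hq_sq x hxt]; ring
      have hGv'int : IntervalIntegrable (fun x => G x * (1/(2 * q x) * (ω x)⁻¹)) volume r R :=
        hci _ (hG_cOn.mul hv'_cOn) r R htr htR
      have hmono : (∫ x in r..R, G x * (1/(2 * q x) * (ω x)⁻¹))
          ≤ ∫ x in r..R, B * ((1/(2 * q x) * (ω x)⁻¹)/(q x)^2) :=
        intervalIntegral.integral_mono_on hrR hGv'int (hψint.const_mul B) hpt
      rw [intervalIntegral.integral_const_mul, hψeq] at hmono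
      -- assemble
      have hqRnn : 0 ≤ (q R)⁻¹ := inv_nonneg.mpr (hq_pos R htR).le
      have hcorr : (∫ x in r..R, G x * (1/(2 * q x) * (ω x)⁻¹)) ≤ B * (q r)⁻¹ := by
        have : -(q R)⁻¹ - -(q r)⁻¹ ≤ (q r)⁻¹ := by linarith
        nlinarith [hmono, hB.le]
      have hqr : 0 < q r := hq_pos r htr
      have h1 : (∫ x in r..R, G x * (1/(2 * q x) * (ω x)⁻¹)) * q r ≤ B := by
        have := mul_le_mul_of_nonneg_right hcorr hqr.le
        rwa [mul_assoc, inv_mul_cancel₀ hqr.ne', mul_one] at this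
      have h2 : G r * q r * q r ≤ B := by
        have hqq : q r * q r = h r := by rw [← hq_sq r htr]; ring
        calc G r * q r * q r = G r * h r := by rw [mul_assoc, hqq]
          _ ≤ B := by linarith [hGB r htr hrR, mul_comm (h r) (G r)]
      rw [hsplit, add_mul]
      linarith
    -- Φ and its derivative
    set e : ℝ → ℝ := fun s => (deriv ubar s)^2 * ω s * q s with he_def
    have he_cOn : ContinuousOn e (Ioi t) :=
      (((hd_c.pow 2).continuousOn).mul hω_cOn).mul hq_cOn
    set Φ : ℝ → ℝ := fun r => ∫ s in a..r, e s with hΦ_def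
    have hΦ_deriv : ∀ x ∈ Ioi t, HasDerivAt Φ (e x) x := by
      intro x hx
      exact intervalIntegral.integral_hasDerivAt_right (hci e he_cOn a x hta hx)
        (he_cOn.stronglyMeasurableAtFilter isOpen_Ioi x hx)
        (he_cOn.continuousAt (isOpen_Ioi.mem_nhds hx))
    have hΦ_cOn : ContinuousOn Φ (Ioi t) :=
      fun x hx => ((hΦ_deriv x hx).continuousAt).continuousWithinAt
    have hΦ_nonneg : ∀ r, a ≤ r → r ≤ R → 0 ≤ Φ r := by
      intro r har hrR
      apply intervalIntegral.integral_nonneg har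
      intro s hs
      have hts : t < s := hta.trans_le hs.1
      have : 0 ≤ q s := Real.sqrt_nonneg _
      have := (hωpos' s hts.le).le
      positivity
    -- Step A : pointwise Cauchy-Schwarz bound
    have hptw : ∀ r ∈ Icc a R, (ubar r)^2 * ω r ≤ 2*(Φ r * w r) := by
      intro r hr
      obtain ⟨har, hrR⟩ := hr
      have htr : t < r := hta.trans_le har
      have hsub : Icc a r ⊆ Ioi t := fun z hz => hta.trans_le hz.1
      have huIcc : uIcc a r = Icc a r := uIcc_of_le har
      have hFTC : (∫ s in a..r, deriv ubar s) = ubar r := by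
        rw [intervalIntegral.integral_deriv_eq_sub
          (fun x _ => (hubar.differentiable (by simp)) x) (hd_c.intervalIntegrable a r)]
        rw [hu0 a (Or.inl le_rfl), sub_zero]
      set f : ℝ → ℝ := fun s => deriv ubar s * Real.sqrt (ω s) * Real.sqrt (q s) with hf_def
      set g : ℝ → ℝ := fun s => (Real.sqrt (ω s) * Real.sqrt (q s))⁻¹ with hg_def
      have hsqrtω : ContinuousOn (fun s => Real.sqrt (ω s)) (Ioi t) :=
        Real.continuous_sqrt.comp_continuousOn hω_cOn
      have hsqrtq : ContinuousOn (fun s => Real.sqrt (q s)) (Ioi t) :=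
        Real.continuous_sqrt.comp_continuousOn hq_cOn
      have hprodpos : ∀ s, t < s → 0 < Real.sqrt (ω s) * Real.sqrt (q s) := fun s hs =>
        mul_pos (Real.sqrt_pos.mpr (hωpos' s hs.le)) (Real.sqrt_pos.mpr (hq_pos s hs))
      have hf_cOn : ContinuousOn f (Icc a r) :=
        (((hd_c.continuousOn).mul hsqrtω).mul hsqrtq).mono hsub
      have hg_cOn : ContinuousOn g (Icc a r) :=
        ((hsqrtω.mul hsqrtq).inv₀ (fun s hs => (hprodpos s hs).ne')).mono hsub
      have hCS := cs_interval har hf_cOn hg_cOn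
      have hfg : (∫ x in a..r, f x * g x) = ubar r := by
        rw [← hFTC]
        apply intervalIntegral.integral_congr
        intro s hs
        have hts : t < s := hta.trans_le (huIcc ▸ hs).1
        rw [hf_def, hg_def]
        dsimp only
        have h1 : Real.sqrt (ω s) ≠ 0 := (Real.sqrt_pos.mpr (hωpos' s hts.le)).ne'
        have h2 : Real.sqrt (q s) ≠ 0 := (Real.sqrt_pos.mpr (hq_pos s hts)).ne'
        field_simp
      have hf2 : (∫ x in a..r, f x ^ 2) = Φ r := by
        rw [hΦ_def]
        apply intervalIntegral.integral_congr
        intro s hs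
        have hts : t < s := hta.trans_le (huIcc ▸ hs).1
        rw [hf_def, he_def]
        dsimp only
        rw [mul_pow, mul_pow, Real.sq_sqrt (hωpos' s hts.le).le,
          Real.sq_sqrt (hq_pos s hts).le]
      -- compute ∫ g²  via FTC with antiderivative 2√(h)
      have h2q_deriv : ∀ x ∈ uIcc a r, HasDerivAt (fun y => 2 * q y) ((ω x * q x)⁻¹) x := by
        intro x hx
        have hxt : x ∈ Ioi t := hsub (huIcc ▸ hx)
        have h1 := (hq_deriv x hxt).const_mul 2
        refine h1.congr_deriv ?_
        have hq0 : q x ≠ 0 := (hq_pos x hxt).ne'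
        have hω0 : ω x ≠ 0 := (hωpos' x (le_of_lt hxt)).ne'
        field_simp
      have hg2int : IntervalIntegrable (fun x => (ω x * q x)⁻¹) volume a r :=
        hci _ ((hω_cOn.mul hq_cOn).inv₀
          (fun x hx => (mul_pos (hωpos' x (le_of_lt hx)) (hq_pos x hx)).ne')) a r hta htr
      have hg2eq : (∫ x in a..r, (ω x * q x)⁻¹) = 2 * q r - 2 * q a :=
        intervalIntegral.integral_eq_sub_of_hasDerivAt h2q_deriv hg2int
      have hg2 : (∫ x in a..r, g x ^ 2) = 2 * q r - 2 * q a := by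
        rw [← hg2eq]
        apply intervalIntegral.integral_congr
        intro s hs
        have hts : t < s := hta.trans_le (huIcc ▸ hs).1
        rw [hg_def]
        dsimp only
        rw [inv_pow, mul_pow, Real.sq_sqrt (hωpos' s hts.le).le,
          Real.sq_sqrt (hq_pos s hts).le]
      rw [hfg, hf2, hg2] at hCS
      have hqa : 0 ≤ q a := Real.sqrt_nonneg _
      have hΦr : 0 ≤ Φ r := hΦ_nonneg r har hrR
      have hqr : 0 ≤ q r := Real.sqrt_nonneg _
      have hsq : (ubar r)^2 ≤ Φ r * (2 * q r) := by
        refine hCS.trans (mul_le_mul_of_nonneg_left ?_ hΦr)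
        linarith
      have hωr : 0 ≤ ω r := (hωpos' r htr.le).le
      have := mul_le_mul_of_nonneg_right hsq hωr
      calc (ubar r)^2 * ω r ≤ (Φ r * (2 * q r)) * ω r := this
        _ = 2*(Φ r * w r) := by rw [hw_def]; ring
    -- the primitive J of w based at R
    set J : ℝ → ℝ := fun y => ∫ s in R..y, w s with hJ_def
    have hJ_deriv : ∀ x ∈ Ioi t, HasDerivAt J (w x) x := by
      intro x hx
      exact intervalIntegral.integral_hasDerivAt_right (hci w hw_cOn R x htR hx)
        (hw_cOn.stronglyMeasurableAtFilter isOpen_Ioi x hx)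
        (hw_cOn.continuousAt (isOpen_Ioi.mem_nhds hx))
    have hJ_cOn : ContinuousOn J (Ioi t) :=
      fun x hx => ((hJ_deriv x hx).continuousAt).continuousWithinAt
    have hsubaR : Icc a R ⊆ Ioi t := fun z hz => hta.trans_le hz.1
    have huIccaR : uIcc a R = Icc a R := uIcc_of_le haR.le
    -- integration by parts : ∫ Φ w = ∫ e (−J)
    have hIBP2 := intervalIntegral.integral_mul_deriv_eq_deriv_mul
      (u := Φ) (v := J) (u' := e) (v' := w)
      (fun x hx => hΦ_deriv x (hsubaR (huIccaR ▸ hx)))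
      (fun x hx => hJ_deriv x (hsubaR (huIccaR ▸ hx)))
      (hci e he_cOn a R hta htR) (hci w hw_cOn a R hta htR)
    have hΦa : Φ a = 0 := intervalIntegral.integral_same
    have hJR : J R = 0 := intervalIntegral.integral_same
    rw [hΦa, hJR, mul_zero, zero_mul, sub_zero, zero_sub] at hIBP2
    -- hIBP2 : ∫ x in a..R, Φ x * w x = - ∫ x in a..R, e x * J x  (check below)
    have hEJ : (∫ x in a..R, Φ x * w x) = ∫ x in a..R, e x * -(J x) := by
      have : (∫ x in a..R, e x * -(J x)) = - ∫ x in a..R, e x * J x := by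
        simp only [mul_neg]
        exact intervalIntegral.integral_neg
      rw [this]
      linarith [hIBP2]
    -- pointwise bound via hK2B
    have hbnd : ∀ x ∈ Icc a R, e x * -(J x) ≤ 2*B*((deriv ubar x)^2 * ω x) := by
      intro x hx
      have hxt : t < x := hta.trans_le hx.1
      have hJx : -(J x) = ∫ s in x..R, w s := by
        rw [hJ_def]
        dsimp only
        rw [intervalIntegral.integral_symm x R, neg_neg]
      have hKB := hK2B x hx.1 hx.2
      have hnn : 0 ≤ (deriv ubar x)^2 * ω x :=
        mul_nonneg (sq_nonneg _) (hωpos' x hxt.le).le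
      calc e x * -(J x) = ((deriv ubar x)^2 * ω x) * ((∫ s in x..R, w s) * q x) := by
            rw [hJx, he_def]; ring
        _ ≤ ((deriv ubar x)^2 * ω x) * (2*B) := mul_le_mul_of_nonneg_left hKB hnn
        _ = 2*B*((deriv ubar x)^2 * ω x) := by ring
    have hd2ω_cOn : ContinuousOn (fun x => (deriv ubar x)^2 * ω x) (Ioi t) :=
      ((hd_c.pow 2).continuousOn).mul hω_cOn
    have hmono3 : (∫ x in a..R, e x * -(J x)) ≤ ∫ x in a..R, 2*B*((deriv ubar x)^2 * ω x) :=
      intervalIntegral.integral_mono_on haR.le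
        (hci _ (he_cOn.mul hJ_cOn.neg) a R hta htR)
        ((hci _ hd2ω_cOn a R hta htR).const_mul _) hbnd
    rw [intervalIntegral.integral_const_mul] at hmono3
    -- global bound over [a, R]
    have hu2ω_cOn : ContinuousOn (fun x => (ubar x)^2 * ω x) (Ioi t) :=
      ((hu_c.pow 2).continuousOn).mul hω_cOn
    have hmono2 : (∫ x in a..R, (ubar x)^2 * ω x) ≤ ∫ x in a..R, 2*(Φ x * w x) :=
      intervalIntegral.integral_mono_on haR.le
        (hci _ hu2ω_cOn a R hta htR)
        ((hci _ (hΦ_cOn.mul hw_cOn) a R hta htR).const_mul _) hptw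
    rw [intervalIntegral.integral_const_mul] at hmono2
    -- conversions between Ioi t and interval integrals
    have hIu : (∫ r in Ioi t, (ubar r)^2 * ω r) = ∫ r in a..R, (ubar r)^2 * ω r := by
      apply conv_integral hta.le haR.le
      · exact ((hu_c.pow 2).continuousOn).mul (hωt.mono Icc_subset_Ici_self)
      · intro x hx; rw [hu0 x (Or.inl hx)]; ring
      · intro x hx; rw [hu0 x (Or.inr hx)]; ring
    have hId : (∫ r in Ioi t, (deriv ubar r)^2 * ω r) = ∫ r in a..R, (deriv ubar r)^2 * ω r := by
      apply conv_integral hta.le haR.le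
      · exact ((hd_c.pow 2).continuousOn).mul (hωt.mono Icc_subset_Ici_self)
      · intro x hx; rw [hd0 x (Or.inl hx)]; ring
      · intro x hx; rw [hd0 x (Or.inr hx)]; ring
    -- the Hardy inequality
    have hkey : N ≤ 4*B*(∫ r in Ioi t, (deriv ubar r)^2 * ω r) := by
      rw [hN, hIu, hId]
      calc (∫ r in a..R, (ubar r)^2 * ω r) ≤ 2 * ∫ x in a..R, Φ x * w x := hmono2
        _ = 2 * ∫ x in a..R, e x * -(J x) := by rw [hEJ]
        _ ≤ 2 * (2*B* ∫ x in a..R, (deriv ubar x)^2 * ω x) := by linarith [hmono3]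
        _ = 4*B*(∫ r in a..R, (deriv ubar r)^2 * ω r) := by ring
    -- final arithmetic
    rw [← hN] at hcoer
    exact arith_final hB hkey hcoer
end

section
/- Let f, g : [0,∞) → (0,∞) be continuous with ∫_0^∞ g dr = ∞, f decreasing with f(s) → 0 as s → ∞, where f(s) = ∫_s^∞ ω̄⁻¹ dr and g = ω̄ for a positive continuous ω̄. If lim_{s→∞} f(s) ∫_0^s g dr = 0, then for every fixed a > 0, lim_{t→∞} f(a+t) ∫_t^{a+t} g dr = 0, and consequently lim_{t→∞} sup over the shifted windows yields lim_{t→∞} f(s) ∫_t^s g dr = 0 uniformly in s > t in the sense that sup_{s>t} f(s) ∫_t^s g dr → 0. -/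
open MeasureTheory Set Filter Topology
open scoped ENNReal

/-!
The window integral over `(t, s]` is at most the integral over `(0, s]`, since `ω ≥ 0`, and
`f ≥ 0` as the tail integral of `ω⁻¹ > 0`. Hence `f s · ∫_t^s ω ≤ f s · ∫_0^s ω` for `0 ≤ t ≤ s`,
and both conclusions follow by squeezing against the hypothesis `f s · ∫_0^s ω → 0`.
-/

theorem setIntegral_Ioc_le_setIntegral_Ioc_of_le {ω : ℝ → ℝ} {a t s : ℝ}
    (hint : IntegrableOn ω (Ioc a s)) (hnn : ∀ r ∈ Ioc a s, 0 ≤ ω r) (hat : a ≤ t) :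
    ∫ r in Ioc t s, ω r ≤ ∫ r in Ioc a s, ω r :=
  setIntegral_mono_set hint ((ae_restrict_iff' measurableSet_Ioc).2 (.of_forall hnn))
    (Ioc_subset_Ioc_left hat).eventuallyLE

theorem tendsto_iSup_Ioi_ofReal_of_le {u : ℝ → ℝ → ℝ} {v : ℝ → ℝ}
    (hv : Tendsto v atTop (𝓝 0)) (huv : ∀ᶠ t in atTop, ∀ s > t, u t s ≤ v s) :
    Tendsto (fun t => ⨆ s ∈ Ioi t, ENNReal.ofReal (u t s)) atTop (𝓝 0) := by
  have hv' : Tendsto (fun s => ENNReal.ofReal (v s)) atTop (𝓝 0) := by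
    simpa using ENNReal.tendsto_ofReal hv
  refine ENNReal.tendsto_nhds_zero.2 fun ε hε => ?_
  obtain ⟨T, hT⟩ := eventually_atTop.1 (ENNReal.tendsto_nhds_zero.1 hv' ε hε)
  filter_upwards [eventually_ge_atTop T, huv] with t hTt hut
  refine iSup₂_le fun s hs => ?_
  exact (ENNReal.ofReal_le_ofReal (hut s hs)).trans (hT s (hTt.trans hs.le))

theorem stmt15_general (ω : ℝ → ℝ)
    (hωc : ContinuousOn ω (Ici 0)) (hωpos : ∀ r ∈ Ici (0:ℝ), 0 < ω r)
    (f : ℝ → ℝ) (hf : ∀ s, f s = ∫ r in Ioi s, (ω r)⁻¹)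
    (h0 : Tendsto (fun s => f s * ∫ r in Ioc 0 s, ω r) atTop (nhds 0)) :
    (∀ a > (0:ℝ), Tendsto (fun t => f (a + t) * ∫ r in Ioc t (a + t), ω r) atTop (nhds 0)) ∧
    Tendsto (fun t : ℝ => ⨆ s ∈ Ioi t, ENNReal.ofReal (f s * ∫ r in Ioc t s, ω r))
      atTop (nhds 0) := by
  have hf_nonneg : ∀ s, 0 ≤ s → 0 ≤ f s := fun s hs => hf s ▸
    setIntegral_nonneg measurableSet_Ioi fun r hr => (inv_pos.2 (hωpos r (hs.trans hr.le))).le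
  have hwindow : ∀ t s, 0 ≤ t → t ≤ s →
      0 ≤ f s * ∫ r in Ioc t s, ω r ∧ f s * ∫ r in Ioc t s, ω r ≤ f s * ∫ r in Ioc 0 s, ω r := by
    intro t s ht hts
    have hfs := hf_nonneg s (ht.trans hts)
    have hint_nonneg : 0 ≤ ∫ r in Ioc t s, ω r :=
      setIntegral_nonneg measurableSet_Ioc fun r hr => (hωpos r (ht.trans hr.1.le)).le
    have hint_le : ∫ r in Ioc t s, ω r ≤ ∫ r in Ioc 0 s, ω r :=
      setIntegral_Ioc_le_setIntegral_Ioc_of_le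
        ((hωc.mono Icc_subset_Ici_self).integrableOn_Icc.mono_set Ioc_subset_Icc_self)
        (fun r hr => (hωpos r hr.1.le).le) ht
    exact ⟨mul_nonneg hfs hint_nonneg, mul_le_mul_of_nonneg_left hint_le hfs⟩
  refine ⟨fun a ha => ?_, tendsto_iSup_Ioi_ofReal_of_le h0 ?_⟩
  · have hshift := h0.comp (tendsto_atTop_add_const_left atTop a tendsto_id)
    refine tendsto_of_tendsto_of_tendsto_of_le_of_le' tendsto_const_nhds hshift ?_ ?_ <;>
      filter_upwards [eventually_ge_atTop 0] with t ht
    exacts [(hwindow t (a + t) ht (by linarith)).1, (hwindow t (a + t) ht (by linarith)).2]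
  · filter_upwards [eventually_ge_atTop 0] with t ht s hs
    exact (hwindow t s ht hs.le).2

/-- Nontrivial direction of Corollary 3.2: with f(s) = ∫_s^∞ ω̄⁻¹ decreasing to 0 and
∫_0^∞ ω̄ = ∞, if f(s)·∫_0^s ω̄ → 0 then for every a > 0, f(a+t)·∫_t^{a+t} ω̄ → 0, and
sup_{s>t} f(s)·∫_t^s ω̄ → 0 as t → ∞. -/
theorem stmt15 (ω : ℝ → ℝ)
    (hωc : ContinuousOn ω (Ici 0)) (hωpos : ∀ r ∈ Ici (0:ℝ), 0 < ω r)
    (hvol : ∫⁻ r in Ioi 0, ENNReal.ofReal (ω r) = ⊤)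
    (hinv : IntegrableOn (fun r => (ω r)⁻¹) (Ioi 0))
    (f : ℝ → ℝ) (hf : ∀ s, f s = ∫ r in Ioi s, (ω r)⁻¹)
    (hfdec : Antitone f) (hf0 : Tendsto f atTop (nhds 0))
    (h0 : Tendsto (fun s => f s * ∫ r in Ioc 0 s, ω r) atTop (nhds 0)) :
    (∀ a > (0:ℝ), Tendsto (fun t => f (a + t) * ∫ r in Ioc t (a + t), ω r) atTop (nhds 0)) ∧
    Tendsto (fun t : ℝ => ⨆ s ∈ Ioi t, ENNReal.ofReal (f s * ∫ r in Ioc t s, ω r))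
      atTop (nhds 0) :=
  stmt15_general ω hωc hωpos f hf h0
end
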